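/- arXiv:1410.2903 — 8 statements merged into one kernel-verified Lean document; each statement's English description precedes it below -/
import Mathlib

section
/- Let p be a prime, n a positive integer, d a positive integer, and e = gcd(d, p^n - 1). Then the power function x ↦ x^d on F_{p^n} is zero-difference (e-1)-balanced; that is, for every nonzero a ∈ F_{p^n}, the equation (x+a)^d = x^d has exactly e-1 solutions x ∈ F_{p^n}. -/
/-!
A solution `x` of `(x + a) ^ d = x ^ d` is nonzero, and `u = (x + a) / x` is then a `d`-th root of
unity different from `1` (as `a ≠ 0`); conversely `x = a / (u - 1)`. So the solutions correspond to
the `d`-th roots of unity other than `1`. With `q = #K`, in the cyclic group `Kˣ` of order `q - 1`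
these are the `gcd(d, q - 1)`-th roots of unity, and there are exactly `gcd(d, q - 1)` of them.
-/

open Finset Polynomial

namespace FiniteField

variable {K : Type*} [Field K] [Fintype K]

theorem exists_isPrimitiveRoot_of_dvd {e : ℕ} (he : e ∣ Fintype.card K - 1) :
    ∃ ζ : K, IsPrimitiveRoot ζ e := by
  classical
  have he' : e ∣ Fintype.card Kˣ := Fintype.card_units (α := K) ▸ he
  have he0 : 0 < e := Nat.pos_of_dvd_of_pos he' Fintype.card_pos
  obtain ⟨ζ, hζ⟩ : ({u : Kˣ | orderOf u = e} : Finset Kˣ).Nonempty := by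
    rw [← Finset.card_pos, IsCyclic.card_orderOf_eq_totient he']
    exact Nat.totient_pos.mpr he0
  exact ⟨ζ, IsPrimitiveRoot.coe_units_iff.mpr ((mem_filter.mp hζ).2 ▸ IsPrimitiveRoot.orderOf ζ)⟩

theorem nthRootsFinset_one_eq_gcd {d : ℕ} (hd : 0 < d) :
    nthRootsFinset d (1 : K) = nthRootsFinset (d.gcd (Fintype.card K - 1)) (1 : K) := by
  ext u
  rw [mem_nthRootsFinset hd, mem_nthRootsFinset (Nat.gcd_pos_of_pos_left _ hd), pow_gcd_eq_one,
    iff_self_and]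
  intro hu
  exact pow_card_sub_one_eq_one u fun h => by simp [h, hd.ne'] at hu

theorem card_nthRootsFinset_one {d : ℕ} (hd : 0 < d) :
    #(nthRootsFinset d (1 : K)) = d.gcd (Fintype.card K - 1) := by
  obtain ⟨ζ, hζ⟩ := exists_isPrimitiveRoot_of_dvd (K := K) (Nat.gcd_dvd_right d _)
  rw [nthRootsFinset_one_eq_gcd hd, hζ.card_nthRootsFinset]

end FiniteField

theorem card_filter_add_pow_eq_pow {K : Type*} [Field K] [Fintype K] [DecidableEq K] {a : K}
    (ha : a ≠ 0) {d : ℕ} (hd : 0 < d) :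
    #{x | (x + a) ^ d = x ^ d} = #(nthRootsFinset d (1 : K)) - 1 := by
  have ne_zero_of_eq {x : K} (hx : (x + a) ^ d = x ^ d) : x ≠ 0 := by
    rintro rfl
    simp [hd.ne', ha] at hx
  rw [← card_erase_of_mem ((mem_nthRootsFinset hd 1).mpr (one_pow d))]
  refine card_nbij' (fun x => (x + a) / x) (fun u => a / (u - 1)) ?_ ?_ ?_ ?_ <;>
    intro x hx <;>
    simp only [mem_coe, mem_filter, mem_univ, true_and, mem_erase, mem_nthRootsFinset hd] at hx ⊢
  · have hx0 := ne_zero_of_eq hx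
    refine ⟨fun h => ha ?_, by rw [div_pow, hx, div_self (pow_ne_zero d hx0)]⟩
    rwa [div_eq_one_iff_eq hx0, add_eq_left] at h
  · have hx1 : x - 1 ≠ 0 := sub_ne_zero.mpr hx.1
    have hsol : a / (x - 1) + a = a / (x - 1) * x := by field_simp; ring
    rw [hsol, mul_pow, hx.2, mul_one]
  · rw [add_div, div_self (ne_zero_of_eq hx), add_sub_cancel_left, div_div_cancel₀ ha]
  · have hx1 : x - 1 ≠ 0 := sub_ne_zero.mpr hx.1
    field_simp
    ring

theorem stmt0_general (p n d : ℕ) (hd : 0 < d)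
    (K : Type) [Field K] [Fintype K] [DecidableEq K]
    (hcard : Fintype.card K = p ^ n)
    (e : ℕ) (he : e = Nat.gcd d (p ^ n - 1)) :
    ∀ a : K, a ≠ 0 →
      (Finset.univ.filter (fun x : K => (x + a) ^ d = x ^ d)).card = e - 1 := by
  intro a ha
  rw [card_filter_add_pow_eq_pow ha hd, FiniteField.card_nthRootsFinset_one hd, hcard, he]

theorem stmt0 (p n d : ℕ) (hp : p.Prime) (hn : 0 < n) (hd : 0 < d)
    (K : Type) [Field K] [Fintype K] [DecidableEq K]
    (hcard : Fintype.card K = p ^ n)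
    (e : ℕ) (he : e = Nat.gcd d (p ^ n - 1)) :
    ∀ a : K, a ≠ 0 →
      (Finset.univ.filter (fun x : K => (x + a) ^ d = x ^ d)).card = e - 1 :=
  stmt0_general p n d hd K hcard e he
end

section
/- Let n be even and G(x) = x + α·Tr(βx + γx³) on F_{2^n}, where α, β, γ ∈ F_{2^n} and α ≠ 0, and Tr is the absolute trace from F_{2^n} to F_2. Then G is a permutation of F_{2^n} if and only if either (γ = 0 and Tr(βα) = 0) or (γα³ = 1 and Tr(βα) = 0). -/
open Finset

theorem stmt5 (n : ℕ) (hn : Even n) (hn0 : 0 < n)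
    (K : Type) [Field K] [Fintype K] [DecidableEq K]
    (hcard : Fintype.card K = 2 ^ n)
    (Tr : K → K) (hTr : ∀ x : K, Tr x = ∑ i ∈ Finset.range n, x ^ (2 ^ i))
    (α β γ : K) (hα : α ≠ 0) :
    Function.Bijective (fun x : K => x + α * Tr (β * x + γ * x ^ 3)) ↔
      ((γ = 0 ∧ Tr (β * α) = 0) ∨ (γ * α ^ 3 = 1 ∧ Tr (β * α) = 0)) := by
  classical
  -- characteristic 2
  haveI hch : CharP K 2 := by
    have hc : ((2 ^ n : ℕ) : K) = 0 := by rw [← hcard]; exact FiniteField.cast_card_eq_zero K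
    have h1 : (ringChar K).Prime := CharP.char_is_prime K (ringChar K)
    have h2 : ringChar K ∣ 2 ^ n := (CharP.cast_eq_zero_iff K (ringChar K) (2 ^ n)).mp hc
    have h3 : ringChar K = 2 :=
      (Nat.prime_dvd_prime_iff_eq h1 Nat.prime_two).mp (h1.dvd_of_dvd_pow h2)
    exact h3 ▸ ringChar.charP K
  haveI hfact2 : Fact (Nat.Prime 2) := ⟨Nat.prime_two⟩
  have h2K : (2 : K) = 0 := by exact_mod_cast (CharP.cast_eq_zero K 2)
  have hdbl : ∀ x : K, x + x = 0 := fun x => by linear_combination x * h2K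
  have haddcancel : ∀ a b : K, a + b = 0 → a = b := by
    intro a b h
    linear_combination h - hdbl b
  -- basic facts about Tr
  have hTr0 : Tr 0 = 0 := by
    rw [hTr]
    apply Finset.sum_eq_zero
    intro i _
    exact zero_pow (by positivity)
  have hTradd : ∀ x y : K, Tr (x + y) = Tr x + Tr y := by
    intro x y
    rw [hTr, hTr, hTr, ← Finset.sum_add_distrib]
    exact Finset.sum_congr rfl fun i _ => add_pow_char_pow x y 2 i
  have hpowcard : ∀ x : K, x ^ (2 : ℕ) ^ n = x := fun x => by
    rw [← hcard]; exact FiniteField.pow_card x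
  have hTrsq : ∀ x : K, Tr (x ^ 2) = Tr x := by
    intro x
    have h1 : ∑ i ∈ range (n + 1), x ^ (2 : ℕ) ^ i
        = (∑ i ∈ range n, x ^ (2 : ℕ) ^ (i + 1)) + x ^ (2 : ℕ) ^ 0 :=
      Finset.sum_range_succ' _ n
    have h2 : ∑ i ∈ range (n + 1), x ^ (2 : ℕ) ^ i
        = (∑ i ∈ range n, x ^ (2 : ℕ) ^ i) + x ^ (2 : ℕ) ^ n :=
      Finset.sum_range_succ _ n
    have h3 : (∑ i ∈ range n, x ^ (2 : ℕ) ^ (i + 1)) + x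
        = (∑ i ∈ range n, x ^ (2 : ℕ) ^ i) + x := by
      rw [pow_zero, pow_one] at h1
      rw [hpowcard x] at h2
      rw [← h1, h2]
    rw [hTr, hTr]
    have h4 : ∑ i ∈ range n, (x ^ 2) ^ (2 : ℕ) ^ i = ∑ i ∈ range n, x ^ (2 : ℕ) ^ (i + 1) := by
      apply Finset.sum_congr rfl
      intro i _
      rw [← pow_mul]
      congr 1
      rw [pow_succ]
      ring
    rw [h4]
    exact add_right_cancel h3
  have hTr01 : ∀ x : K, Tr x = 0 ∨ Tr x = 1 := by
    intro x
    have hsum : Tr x ^ 2 = Tr (x ^ 2) := by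
      rw [hTr, hTr, sum_pow_char]
      apply Finset.sum_congr rfl
      intro i _
      rw [← pow_mul, ← pow_mul, Nat.mul_comm]
    have h := hsum.trans (hTrsq x)
    have hfac : Tr x * (Tr x - 1) = 0 := by linear_combination h
    rcases mul_eq_zero.mp hfac with h' | h'
    · exact Or.inl h'
    · exact Or.inr (by linear_combination h')
  have hTr1 : Tr 1 = 0 := by
    rw [hTr]
    simp only [one_pow, Finset.sum_const, card_range, nsmul_eq_mul, mul_one]
    exact (CharP.cast_eq_zero_iff K 2 n).mpr hn.two_dvd
  -- nondegeneracy of the trace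
  have hexists : ∃ y : K, Tr y ≠ 0 := by
    set p : Polynomial K := ∑ i ∈ range n, (Polynomial.X : Polynomial K) ^ (2 : ℕ) ^ i with hp
    have heval : ∀ x : K, p.eval x = Tr x := fun x => by
      rw [hTr, hp, Polynomial.eval_finset_sum]
      exact Finset.sum_congr rfl fun i _ => by rw [Polynomial.eval_pow, Polynomial.eval_X]
    have hpne : p ≠ 0 := by
      intro h
      have hc1 : p.coeff 1 = 1 := by
        rw [hp, Polynomial.finset_sum_coeff]
        rw [Finset.sum_eq_single 0]
        · simp
        · intro i hi hne
          rw [Polynomial.coeff_X_pow]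
          have h1 : 1 < (2 : ℕ) ^ i := Nat.one_lt_two_pow_iff.mpr hne
          have : (1 : ℕ) ≠ 2 ^ i := by omega
          simp [this]
        · intro h0; exact absurd (Finset.mem_range.mpr hn0) h0
      rw [h] at hc1
      simp at hc1
    have hdeg : (p.natDegree : Cardinal) < Cardinal.mk K := by
      have h1 : p.natDegree ≤ 2 ^ (n - 1) := by
        rw [hp]
        apply Polynomial.natDegree_sum_le_of_forall_le
        intro i hi
        rw [Polynomial.natDegree_X_pow]
        have hi' : i < n := Finset.mem_range.mp hi
        exact Nat.pow_le_pow_right (by norm_num) (by omega)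
      have h2 : (2 : ℕ) ^ (n - 1) < 2 ^ n := Nat.pow_lt_pow_right (by norm_num) (by omega)
      rw [Cardinal.mk_fintype, hcard]
      exact_mod_cast lt_of_le_of_lt h1 h2
    obtain ⟨r, hr⟩ := Polynomial.exists_eval_ne_zero_of_natDegree_lt_card p hpne hdeg
    exact ⟨r, by rwa [heval] at hr⟩
  have hnondeg : ∀ d : K, (∀ x : K, Tr (d * x) = 0) → d = 0 := by
    intro d hd
    by_contra hd0
    obtain ⟨y, hy⟩ := hexists
    have := hd (d⁻¹ * y)
    rw [← mul_assoc, mul_inv_cancel₀ hd0, one_mul] at this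
    exact hy this
  -- the square root of γα
  obtain ⟨s, hs2⟩ : ∃ s : K, s ^ 2 = γ * α := by
    refine ⟨(γ * α) ^ (2 : ℕ) ^ (n - 1), ?_⟩
    rw [← pow_mul]
    have he : (2 : ℕ) ^ (n - 1) * 2 = 2 ^ n := by
      rw [← pow_succ]
      congr 1
      omega
    rw [he, hpowcard]
  -- the key identity
  have key : ∀ x : K, Tr (β * (x + α) + γ * (x + α) ^ 3) + Tr (β * x + γ * x ^ 3)
      = Tr ((s + γ * α ^ 2) * x + (β * α + γ * α ^ 3)) := by
    intro x
    have e1 : β * (x + α) + γ * (x + α) ^ 3 + (β * x + γ * x ^ 3)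
        = ((s + γ * α ^ 2) * x + (β * α + γ * α ^ 3)) + ((s * x) ^ 2 + s * x) := by
      linear_combination (-(x ^ 2)) * hs2 +
        (γ * α * x ^ 2 + β * x + γ * x ^ 3 + γ * α ^ 2 * x - s * x) * h2K
    rw [← hTradd, e1]
    simp only [hTradd]
    rw [hTrsq]
    linear_combination hdbl (Tr (s * x))
  -- bijectivity criterion
  have crit : Function.Bijective (fun x : K => x + α * Tr (β * x + γ * x ^ 3))
      ↔ ∀ x : K, Tr (β * (x + α) + γ * (x + α) ^ 3) = Tr (β * x + γ * x ^ 3) := by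
    constructor
    · intro hbij x
      by_contra hne
      have hGeq : x + α * Tr (β * x + γ * x ^ 3)
          = (x + α) + α * Tr (β * (x + α) + γ * (x + α) ^ 3) := by
        rcases hTr01 (β * x + γ * x ^ 3) with h0 | h1 <;>
          rcases hTr01 (β * (x + α) + γ * (x + α) ^ 3) with g0 | g1
        · exact absurd (g0.trans h0.symm) hne
        · rw [h0, g1]; linear_combination (-α) * h2K
        · rw [h1, g0]; ring
        · exact absurd (g1.trans h1.symm) hne
      have hinj : x = x + α := hbij.injective hGeq
      exact hα (by linear_combination -hinj)
    · intro h
      rw [← Finite.injective_iff_bijective]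
      intro a b hab
      simp only at hab
      rcases hTr01 (β * a + γ * a ^ 3) with ha | ha <;>
        rcases hTr01 (β * b + γ * b ^ 3) with hb | hb
      · rw [ha, hb] at hab; linear_combination hab
      · exfalso
        have hab' : a = b + α := by rw [ha, hb] at hab; linear_combination hab
        have hcon := h b
        rw [← hab', ha, hb] at hcon
        exact one_ne_zero hcon.symm
      · exfalso
        have hab' : b = a + α := by rw [ha, hb] at hab; linear_combination -hab
        have hcon := h a
        rw [← hab', ha, hb] at hcon
        exact zero_ne_one hcon
      · rw [ha, hb] at hab; linear_combination hab
  rw [crit]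
  constructor
  · intro h
    have hz : ∀ x : K, Tr ((s + γ * α ^ 2) * x + (β * α + γ * α ^ 3)) = 0 := by
      intro x
      have hk := key x
      rw [h x, hdbl] at hk
      exact hk.symm
    have hc0 : Tr (β * α + γ * α ^ 3) = 0 := by
      have := hz 0
      rwa [mul_zero, zero_add] at this
    have hd0 : s + γ * α ^ 2 = 0 := by
      apply hnondeg
      intro x
      have := hz x
      rwa [hTradd, hc0, add_zero] at this
    have h1 : (s + γ * α ^ 2) ^ 2 = s ^ 2 + (γ * α ^ 2) ^ 2 := by
      linear_combination (s * (γ * α ^ 2)) * h2K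
    rw [hd0, hs2] at h1
    have hsq0 : γ * α + (γ * α ^ 2) ^ 2 = 0 := by linear_combination -h1
    have hfact : (γ * α) * (1 + γ * α ^ 3) = 0 := by linear_combination hsq0
    rcases mul_eq_zero.mp hfact with h1' | h1'
    · have hγ : γ = 0 := by
        rcases mul_eq_zero.mp h1' with h' | h'
        · exact h'
        · exact absurd h' hα
      left
      refine ⟨hγ, ?_⟩
      have e : β * α + γ * α ^ 3 = β * α := by rw [hγ]; ring
      rwa [e] at hc0
    · have hγ : γ * α ^ 3 = 1 := by linear_combination h1' - h2K
      right
      refine ⟨hγ, ?_⟩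
      have e : β * α + γ * α ^ 3 = β * α + 1 := by rw [hγ]
      rwa [e, hTradd, hTr1, add_zero] at hc0
  · rintro h x
    have hd0 : s + γ * α ^ 2 = 0 := by
      rcases h with ⟨hγ, hβ⟩ | ⟨hγ, hβ⟩
      · have hs0 : s = 0 := by
          have hx : s ^ 2 = 0 := by rw [hs2, hγ]; ring
          exact pow_eq_zero_iff (two_ne_zero) |>.mp hx
        rw [hs0, hγ]; ring
      · have hsq' : (s + γ * α ^ 2) ^ 2 = 0 := by
          have h1 : (s + γ * α ^ 2) ^ 2 = s ^ 2 + (γ * α ^ 2) ^ 2 := by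
            linear_combination (s * (γ * α ^ 2)) * h2K
          rw [h1, hs2]
          linear_combination (γ * α) * hγ + (γ * α) * h2K
        exact pow_eq_zero_iff (two_ne_zero) |>.mp hsq'
    have hc0 : Tr (β * α + γ * α ^ 3) = 0 := by
      rcases h with ⟨hγ, hβ⟩ | ⟨hγ, hβ⟩
      · have e : β * α + γ * α ^ 3 = β * α := by rw [hγ]; ring
        rw [e]; exact hβ
      · have e : β * α + γ * α ^ 3 = β * α + 1 := by rw [hγ]
        rw [e, hTradd, hTr1, add_zero]; exact hβ
    have hk := key x
    rw [hd0, zero_mul, zero_add, hc0] at hk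
    exact haddcancel _ _ hk
end

section
/- Let n be even, and suppose α, β, γ ∈ F_{2^n} with α ≠ 0 satisfy either (γ = 0 and Tr(βα) = 0) or (γα³ = 1 and Tr(βα) = 0). Then the function F(x) = x³ + α·Tr(βx³ + γx⁹) on F_{2^n} is APN, i.e., differentially 2-uniform: for every nonzero a and every b ∈ F_{2^n}, the equation F(x+a) + F(x) = b has at most 2 solutions. -/
open Finset

theorem stmt6 (n : ℕ) (hn : Even n) (hn0 : 0 < n)
    (K : Type) [Field K] [Fintype K] [DecidableEq K]
    (hcard : Fintype.card K = 2 ^ n)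
    (Tr : K → K) (hTr : ∀ x : K, Tr x = ∑ i ∈ Finset.range n, x ^ (2 ^ i))
    (α β γ : K) (hα : α ≠ 0)
    (hcond : (γ = 0 ∧ Tr (β * α) = 0) ∨ (γ * α ^ 3 = 1 ∧ Tr (β * α) = 0))
    (F : K → K) (hF : ∀ x : K, F x = x ^ 3 + α * Tr (β * x ^ 3 + γ * x ^ 9)) :
    ∀ a : K, a ≠ 0 → ∀ b : K,
      (Finset.univ.filter (fun x : K => F (x + a) + F x = b)).card ≤ 2 := by
  -- characteristic 2 preliminaries
  have hq : ((2:K))^n = 0 := by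
    have h := FiniteField.cast_card_eq_zero K
    rw [hcard] at h
    push_cast at h
    exact h
  have h2 : (2:K) = 0 := pow_eq_zero_iff hn0.ne' |>.mp hq
  have hchar : ringChar K = 2 := by
    have hd : ringChar K ∣ 2 := ringChar.dvd (by exact_mod_cast h2)
    exact ((Nat.dvd_prime Nat.prime_two).mp hd).resolve_left CharP.ringChar_ne_one
  haveI : CharP K 2 := hchar ▸ ringChar.charP K
  have hxq : ∀ x : K, x ^ (2^n) = x := by
    intro x
    rw [← hcard]; exact FiniteField.pow_card x
  have TrAdd : ∀ x y : K, Tr (x + y) = Tr x + Tr y := by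
    intro x y
    rw [hTr, hTr, hTr, ← Finset.sum_add_distrib]
    exact Finset.sum_congr rfl fun i _ => add_pow_char_pow ..
  have TrSq : ∀ x : K, Tr (x^2) = Tr x := by
    intro x
    rw [hTr, hTr]
    have hpt : ∀ i, (x^2)^(2^i) = x^(2^(i+1)) := by
      intro i
      rw [← pow_mul, pow_succ, mul_comm (2^i) 2, pow_mul]
    simp_rw [hpt]
    have A : (∑ i ∈ Finset.range n, x^(2^(i+1))) + x^(2^0) =
        (∑ i ∈ Finset.range n, x^(2^i)) + x^(2^n) := by
      rw [← Finset.sum_range_succ' (fun j => x^(2^j)) n, Finset.sum_range_succ]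
    rw [pow_zero, pow_one, hxq] at A
    exact add_right_cancel A
  have TrVal : ∀ x : K, Tr x = 0 ∨ Tr x = 1 := by
    intro x
    have hsq : Tr x ^ 2 = Tr x := by
      rw [hTr, sum_pow_char]
      have : ∀ i, (x^(2^i))^2 = (x^2)^(2^i) := by
        intro i; rw [← pow_mul, ← pow_mul, mul_comm]
      simp_rw [this]
      rw [← hTr, ← hTr, TrSq]
    have : Tr x * (Tr x - 1) = 0 := by linear_combination hsq
    rcases mul_eq_zero.mp this with h | h
    · exact Or.inl h
    · exact Or.inr (by linear_combination h)
  have Tr0 : Tr 0 = 0 := by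
    rw [hTr]
    apply Finset.sum_eq_zero
    intro i _
    exact zero_pow (pow_ne_zero i two_ne_zero)
  -- main argument
  intro a ha b
  by_contra hcon
  push_neg at hcon
  obtain ⟨x, y, z, hxS, hyS, hzS, hxy, hxz, hyz⟩ := Finset.two_lt_card_iff.mp hcon
  have key : ∀ x : K, F (x + a) + F x =
      (a*x^2+a^2*x+a^3) + α * Tr (β*(a*x^2+a^2*x+a^3) + γ*(a*x^8+a^8*x+a^9)) := by
    intro x
    have e3 : (x+a)^3 = (a*x^2+a^2*x+a^3) + x^3 := by
      linear_combination (a*x^2+a^2*x)*h2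
    have e9 : (x+a)^9 = (a*x^8+a^8*x+a^9) + x^9 := by
      linear_combination (4*a*x^8+18*a^2*x^7+42*a^3*x^6+63*a^4*x^5+63*a^5*x^4+42*a^6*x^3
        +18*a^7*x^2+4*a^8*x)*h2
    rw [hF, hF, e3, e9]
    have earg : β*((a*x^2+a^2*x+a^3) + x^3) + γ*((a*x^8+a^8*x+a^9) + x^9)
        = (β*(a*x^2+a^2*x+a^3) + γ*(a*x^8+a^8*x+a^9)) + (β*x^3 + γ*x^9) := by ring
    rw [earg, TrAdd]
    linear_combination (x^3 + α * Tr (β*x^3+γ*x^9)) * h2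
  have hsol : ∀ w : K, w ∈ Finset.univ.filter (fun x : K => F (x + a) + F x = b) →
      (a*w^2+a^2*w+a^3) + α * Tr (β*(a*w^2+a^2*w+a^3) + γ*(a*w^8+a^8*w+a^9)) = b := by
    intro w hw
    rw [← key w]
    exact (Finset.mem_filter.mp hw).2
  have Ex := hsol x hxS
  have Ey := hsol y hyS
  have Ez := hsol z hzS
  -- fiber lemma
  have fib : ∀ p q : K, p ≠ q →
      (a*p^2+a^2*p+a^3) = (a*q^2+a^2*q+a^3) → p = q + a := by
    intro p q hpq h
    have h0 : a * (p - q) * (p - q - a) = 0 := by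
      linear_combination h + (-(a*p*q) + a*q^2 - a^2*p + a^2*q)*h2
    rcases mul_eq_zero.mp h0 with h' | h'
    · rcases mul_eq_zero.mp h' with h'' | h''
      · exact absurd h'' ha
      · exact absurd (sub_eq_zero.mp h'') hpq
    · have : p - q = a := by linear_combination h'
      linear_combination this
  -- find a mixed pair
  have exmixed : ∃ u v : K,
      ((a*u^2+a^2*u+a^3) + α * Tr (β*(a*u^2+a^2*u+a^3) + γ*(a*u^8+a^8*u+a^9)) = b) ∧
      ((a*v^2+a^2*v+a^3) + α * Tr (β*(a*v^2+a^2*v+a^3) + γ*(a*v^8+a^8*v+a^9)) = b) ∧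
      Tr (β*(a*u^2+a^2*u+a^3) + γ*(a*u^8+a^8*u+a^9)) = 0 ∧
      Tr (β*(a*v^2+a^2*v+a^3) + γ*(a*v^8+a^8*v+a^9)) = 1 := by
    have mk : ∀ p q : K,
        ((a*p^2+a^2*p+a^3) + α * Tr (β*(a*p^2+a^2*p+a^3) + γ*(a*p^8+a^8*p+a^9)) = b) →
        ((a*q^2+a^2*q+a^3) + α * Tr (β*(a*q^2+a^2*q+a^3) + γ*(a*q^8+a^8*q+a^9)) = b) →
        Tr (β*(a*p^2+a^2*p+a^3) + γ*(a*p^8+a^8*p+a^9)) ≠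
          Tr (β*(a*q^2+a^2*q+a^3) + γ*(a*q^8+a^8*q+a^9)) →
        ∃ u v : K,
        ((a*u^2+a^2*u+a^3) + α * Tr (β*(a*u^2+a^2*u+a^3) + γ*(a*u^8+a^8*u+a^9)) = b) ∧
        ((a*v^2+a^2*v+a^3) + α * Tr (β*(a*v^2+a^2*v+a^3) + γ*(a*v^8+a^8*v+a^9)) = b) ∧
        Tr (β*(a*u^2+a^2*u+a^3) + γ*(a*u^8+a^8*u+a^9)) = 0 ∧
        Tr (β*(a*v^2+a^2*v+a^3) + γ*(a*v^8+a^8*v+a^9)) = 1 := by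
      intro p q hp hq hne
      rcases TrVal (β*(a*p^2+a^2*p+a^3) + γ*(a*p^8+a^8*p+a^9)) with h1 | h1 <;>
        rcases TrVal (β*(a*q^2+a^2*q+a^3) + γ*(a*q^8+a^8*q+a^9)) with h1' | h1'
      · exact absurd (h1.trans h1'.symm) hne
      · exact ⟨p, q, hp, hq, h1, h1'⟩
      · exact ⟨q, p, hq, hp, h1', h1⟩
      · exact absurd (h1.trans h1'.symm) hne
    by_cases hTxy : Tr (β*(a*x^2+a^2*x+a^3) + γ*(a*x^8+a^8*x+a^9)) =
        Tr (β*(a*y^2+a^2*y+a^3) + γ*(a*y^8+a^8*y+a^9))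
    · -- then x = y + a; compare with z
      have hDxy : (a*x^2+a^2*x+a^3) = (a*y^2+a^2*y+a^3) := by
        linear_combination Ex - Ey - α*hTxy
      have hxeq : x = y + a := fib x y hxy hDxy
      by_cases hTxz : Tr (β*(a*x^2+a^2*x+a^3) + γ*(a*x^8+a^8*x+a^9)) =
          Tr (β*(a*z^2+a^2*z+a^3) + γ*(a*z^8+a^8*z+a^9))
      · have hDxz : (a*x^2+a^2*x+a^3) = (a*z^2+a^2*z+a^3) := by
          linear_combination Ex - Ez - α*hTxz
        have hxeq' : x = z + a := fib x z hxz hDxz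
        exact absurd (by linear_combination hxeq - hxeq' + (y - z)*h2 : y = z) hyz
      · exact mk x z Ex Ez hTxz
    · exact mk x y Ex Ey hTxy
  obtain ⟨u, v, Equ, Eqv, hTu, hTv⟩ := exmixed
  have hDu : (a*u^2+a^2*u+a^3) = b := by linear_combination Equ - α*hTu
  have hDv : (a*v^2+a^2*v+a^3) = b + α := by linear_combination Eqv - α*hTv - α*h2
  have hw : a*(u-v)^2 + a^2*(u-v) = α := by
    linear_combination hDu - hDv + (-(a*u*v) + a*v^2 - α)*h2
  have hE : (a*u^8+a^8*u+a^9) + (a*v^8+a^8*v+a^9) = a*(u-v)^8 + a^8*(u-v) := by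
    linear_combination (4*a*u^7*v - 14*a*u^6*v^2 + 28*a*u^5*v^3 - 35*a*u^4*v^4
      + 28*a*u^3*v^5 - 14*a*u^2*v^6 + 4*a*u*v^7 + a^8*v + a^9)*h2
  have hargsum : (β*(a*u^2+a^2*u+a^3) + γ*(a*u^8+a^8*u+a^9))
      + (β*(a*v^2+a^2*v+a^3) + γ*(a*v^8+a^8*v+a^9))
      = β*α + γ*(a*(u-v)^8 + a^8*(u-v)) := by
    linear_combination β*hDu + β*hDv + γ*hE + β*b*h2
  have hTrsum : Tr (β*(a*u^2+a^2*u+a^3) + γ*(a*u^8+a^8*u+a^9))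
      + Tr (β*(a*v^2+a^2*v+a^3) + γ*(a*v^8+a^8*v+a^9))
      = Tr (β*α) + Tr (γ*(a*(u-v)^8 + a^8*(u-v))) := by
    rw [← TrAdd, ← TrAdd, hargsum]
  obtain ⟨hβ, hTrX⟩ : Tr (β*α) = 0 ∧ Tr (γ*(a*(u-v)^8 + a^8*(u-v))) = 0 := by
    rcases hcond with ⟨hγ, hβ⟩ | ⟨hγ, hβ⟩
    · refine ⟨hβ, ?_⟩
      rw [hγ, zero_mul, Tr0]
    · refine ⟨hβ, ?_⟩
      -- the algebraic core
      set w : K := u - v with hwdef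
      set s : K := w * a⁻¹ with hsdef
      set t : K := a^3 * α⁻¹ with htdef
      have hsa : s * a = w := by
        rw [hsdef]
        field_simp
      have hta : t * α = a^3 := by
        rw [htdef]
        field_simp
      have step1 : a^3*(a*w^8 + a^8*w) = α^4 + a^6*α^2 + a^9*α := by
        linear_combination ((a*w^2+a^2*w)^3 + (a*w^2+a^2*w)^2*α + (a*w^2+a^2*w)*α^2 + α^3
          + a^6*((a*w^2+a^2*w)+α) + a^9)*hw
          + (-2*a^5*w^7 - 3*a^6*w^6 - 2*a^7*w^5 - a^8*w^4 - a^9*w^3 - a^10*w^2)*h2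
      have hu' : (s^2+s)*a^3 = α := by
        linear_combination hw + (a*(s*a+w) + a^2)*hsa
      have hX : γ*(a*w^8+a^8*w) = (s^2+s) + (t + t^2) := by
        have hne : a^5*α^3 ≠ 0 := mul_ne_zero (pow_ne_zero _ ha) (pow_ne_zero _ hα)
        apply mul_right_cancel₀ hne
        linear_combination (a^5*(a*w^8+a^8*w))*hγ + a^2*step1 - a^2*α^3*hu'
          - (a^5*α^2 + a^5*α*(t*α+a^3))*hta
      rw [hX, TrAdd]
      have h1 : Tr (s^2+s) = 0 := by
        rw [TrAdd, TrSq]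
        linear_combination (Tr s)*h2
      have h1' : Tr (t+t^2) = 0 := by
        rw [TrAdd, TrSq]
        linear_combination (Tr t)*h2
      rw [h1, h1', add_zero]
  have : (1:K) = 0 := by
    calc (1:K) = Tr (β*(a*u^2+a^2*u+a^3) + γ*(a*u^8+a^8*u+a^9))
        + Tr (β*(a*v^2+a^2*v+a^3) + γ*(a*v^8+a^8*v+a^9)) := by rw [hTu, hTv, zero_add]
      _ = Tr (β*α) + Tr (γ*(a*(u-v)^8 + a^8*(u-v))) := hTrsum
      _ = 0 := by rw [hβ, hTrX, add_zero]
  exact one_ne_zero this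
end

section
/- The function F(x) = x³ + Tr(x⁹) on F_{2^n} with n even is APN. Equivalently, the function G(x) = x + Tr(x³) is a permutation of F_{2^n}, hence F(x) = G(x³) is differentially 2-uniform. -/
open Finset

theorem aux_key {K : Type} [Field K] (Tr : K → K)
    (h2 : (2:K) = 0)
    (hadd : ∀ x y : K, Tr (x+y) = Tr x + Tr y)
    (hsq : ∀ x : K, Tr (x^2) = Tr x)
    (h01 : ∀ x : K, Tr x = 0 ∨ Tr x = 1)
    (a : K) (ha : a ≠ 0) (z : K)
    (hz : a*z^2 + a^2*z + Tr (a*z^8 + a^8*z) = 0) :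
    z = 0 ∨ z = a := by
  rcases h01 (a*z^8 + a^8*z) with ht | ht
  · rw [ht, add_zero] at hz
    have hfac : a * z * (z + a) = 0 := by linear_combination hz
    rcases mul_eq_zero.mp hfac with h | h
    · rcases mul_eq_zero.mp h with h' | h'
      · exact absurd h' ha
      · exact Or.inl h'
    · right; linear_combination h - a*h2
  · rw [ht] at hz
    have hE : a*z^2 + a^2*z = 1 := by linear_combination hz - h2
    have h' : a^2*(a*z^8 + a^8*z) = z^2 + z*a + a^2*(a^6 + a^3) := by
      linear_combination (a^2*z^6 - a^3*z^5 + (a+a^4)*z^4 + (-2*a^2-a^5)*z^3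
        + (1+3*a^3+a^6)*z^2 + (-3*a-4*a^4-a^7)*z + (6*a^2+5*a^5+a^8)) * hE
        + (z*(-2*a-5*a^4-3*a^7) + 2*a^5+3*a^2) * h2
    have ha2 : a^2 ≠ 0 := pow_ne_zero _ ha
    have hinv : a * a⁻¹ = 1 := mul_inv_cancel₀ ha
    have hid : a*z^8 + a^8*z = (z*a⁻¹)^2 + (z*a⁻¹ + ((a^3)^2 + a^3)) := by
      apply mul_left_cancel₀ ha2
      linear_combination h' + (z^2*(a*a⁻¹+1) + z*a)*hinv
        + (a*z - a^2*z*a⁻¹ - a^2*z^2*a⁻¹^2 + z^2)*h2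
    have hzero : Tr (a*z^8 + a^8*z) = 0 := by
      rw [hid, hadd, hadd, hadd, hsq, hsq]
      linear_combination (Tr (z*a⁻¹) + Tr (a^3))*h2
    exact absurd (hzero.symm.trans ht) zero_ne_one

theorem stmt7 (n : ℕ) (hn : Even n) (hn0 : 0 < n)
    (K : Type) [Field K] [Fintype K] [DecidableEq K]
    (hcard : Fintype.card K = 2 ^ n)
    (Tr : K → K) (hTr : ∀ x : K, Tr x = ∑ i ∈ Finset.range n, x ^ (2 ^ i))
    (F : K → K) (hF : ∀ x : K, F x = x ^ 3 + Tr (x ^ 9)) :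
    Function.Bijective (fun x : K => x + Tr (x ^ 3)) ∧
    (∀ a : K, a ≠ 0 → ∀ b : K,
      (Finset.univ.filter (fun x : K => F (x + a) + F x = b)).card ≤ 2) := by
  -- characteristic 2
  haveI hKp : CharP K (ringChar K) := ringChar.charP K
  have hprime : Nat.Prime (ringChar K) := CharP.char_is_prime K _
  obtain ⟨m, -, hm⟩ := FiniteField.card K (ringChar K)
  have hr2 : ringChar K = 2 := by
    have hdvd : ringChar K ∣ 2 ^ n := by
      rw [← hcard, hm]; exact dvd_pow_self _ m.ne_zero
    exact (Nat.prime_dvd_prime_iff_eq hprime Nat.prime_two).mp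
      (hprime.dvd_of_dvd_pow hdvd)
  haveI hC2 : CharP K 2 := hr2 ▸ hKp
  haveI : Fact (Nat.Prime 2) := ⟨Nat.prime_two⟩
  have h2 : (2:K) = 0 := by exact_mod_cast CharP.cast_eq_zero K 2
  -- basic trace facts
  have TrAdd : ∀ x y : K, Tr (x+y) = Tr x + Tr y := by
    intro x y
    rw [hTr, hTr, hTr, ← Finset.sum_add_distrib]
    exact Finset.sum_congr rfl fun i _ => add_pow_char_pow x y 2 i
  have hfrob : ∀ x : K, x ^ (2^n) = x := by
    intro x; rw [← hcard]; exact FiniteField.pow_card x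
  have TrSq : ∀ x : K, Tr (x^2) = Tr x := by
    intro x
    have e1 : ∑ i ∈ Finset.range (n+1), x^(2^i)
        = (∑ i ∈ Finset.range n, x^(2^(i+1))) + x^(2^0) :=
      Finset.sum_range_succ' _ n
    have e2 : ∑ i ∈ Finset.range (n+1), x^(2^i)
        = (∑ i ∈ Finset.range n, x^(2^i)) + x^(2^n) :=
      Finset.sum_range_succ _ n
    rw [hfrob] at e2
    norm_num at e1
    rw [hTr, hTr]
    have hterm : ∀ i ∈ Finset.range n, (x^2)^(2^i) = x^(2^(i+1)) := by
      intro i _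
      rw [← pow_mul, ← pow_succ']
    rw [Finset.sum_congr rfl hterm]
    linear_combination e2 - e1
  have TrBool : ∀ x : K, Tr x = 0 ∨ Tr x = 1 := by
    intro x
    have h1 : (Tr x)^2 = Tr (x^2) := by
      rw [hTr x, hTr (x^2), sum_pow_char]
      exact Finset.sum_congr rfl fun i _ => by rw [← pow_mul, ← pow_mul, mul_comm]
    have hpow : (Tr x)^2 = Tr x := by rw [h1, TrSq]
    have : Tr x * (Tr x - 1) = 0 := by linear_combination hpow
    rcases mul_eq_zero.mp this with h | h
    · exact Or.inl h
    · exact Or.inr (by linear_combination h)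
  have Tr1 : Tr (1:K) = 0 := by
    obtain ⟨k, hk⟩ := hn
    rw [hTr]
    simp only [one_pow, Finset.sum_const, Finset.card_range, nsmul_eq_mul, mul_one]
    rw [hk]
    push_cast
    linear_combination (k:K)*h2
  have h8 : ∀ u v : K, (u+v)^8 = u^8 + v^8 := by
    intro u v
    have := add_pow_char_pow u v 2 3
    norm_num at this
    exact this
  constructor
  · -- bijectivity
    rw [← Finite.injective_iff_bijective]
    intro x y hxy
    simp only at hxy
    have lemG : ∀ y : K, Tr ((y+1)^3) = Tr (y^3) := by
      intro y
      have c : (y+1)^3 = y^3 + (y^2 + (y+1)) := by linear_combination (y^2+y)*h2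
      rw [c, TrAdd, TrAdd, TrAdd, TrSq, Tr1]
      linear_combination (Tr y)*h2
    rcases TrBool (x^3) with hd | hd <;> rcases TrBool (y^3) with he | he
    · rw [hd, he] at hxy; simpa using hxy
    · have hx1 : x = y + 1 := by rw [hd, he] at hxy; linear_combination hxy
      have : Tr (x^3) = Tr (y^3) := by rw [hx1]; exact lemG y
      rw [hd, he] at this
      exact absurd this.symm one_ne_zero
    · have hy1 : y = x + 1 := by rw [hd, he] at hxy; linear_combination -hxy
      have : Tr (y^3) = Tr (x^3) := by rw [hy1]; exact lemG x
      rw [hd, he] at this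
      exact absurd this.symm one_ne_zero
    · rw [hd, he] at hxy; exact add_right_cancel hxy
  · -- APN property
    intro a ha b
    have hD : ∀ x : K, F (x+a) + F x
        = a*x^2 + a^2*x + a^3 + Tr (a*x^8 + a^8*x + a^9) := by
      intro x
      rw [hF, hF]
      have c9 : (x+a)^9 = x^9 + (a*x^8 + a^8*x + a^9) := by
        have h8' := h8 x a
        have e : (x+a)^9 = (x+a)^8 * (x+a) := by ring
        rw [e, h8']; ring
      rw [c9, TrAdd]
      linear_combination (x^3 + a*x^2 + a^2*x + Tr (x^9))*h2
    have main : ∀ x ∈ Finset.univ.filter (fun x : K => F (x + a) + F x = b),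
        ∀ y ∈ Finset.univ.filter (fun x : K => F (x + a) + F x = b),
        y = x ∨ y = x + a := by
      intro x hx y hy
      have ex : a*x^2 + a^2*x + a^3 + Tr (a*x^8 + a^8*x + a^9) = b := by
        rw [← hD x]; exact (Finset.mem_filter.mp hx).2
      have ey : a*y^2 + a^2*y + a^3 + Tr (a*y^8 + a^8*y + a^9) = b := by
        rw [← hD y]; exact (Finset.mem_filter.mp hy).2
      have hTrU : Tr (a*x^8 + a^8*x + a^9) + Tr (a*y^8 + a^8*y + a^9)
          = Tr (a*(x+y)^8 + a^8*(x+y)) := by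
        rw [← TrAdd]
        congr 1
        linear_combination (-a)*(h8 x y) + a^9*h2
      have hkey : a*(x+y)^2 + a^2*(x+y) + Tr (a*(x+y)^8 + a^8*(x+y)) = 0 := by
        linear_combination ex - ey + hTrU
          + (a*y^2 + a*x*y + a^2*y + Tr (a*(x+y)^8 + a^8*(x+y))
             - Tr (a*x^8 + a^8*x + a^9))*h2
      rcases aux_key Tr h2 TrAdd TrSq TrBool a ha (x+y) hkey with h | h
      · left; linear_combination h - x*h2
      · right; linear_combination h - x*h2
    rcases Finset.eq_empty_or_nonempty
        (Finset.univ.filter (fun x : K => F (x + a) + F x = b)) with h | ⟨x₀, hx₀⟩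
    · simp [h]
    · have hsub : Finset.univ.filter (fun x : K => F (x + a) + F x = b)
          ⊆ ({x₀, x₀ + a} : Finset K) := by
        intro y hy
        rcases main x₀ hx₀ y hy with h | h <;> simp [h]
      calc (Finset.univ.filter (fun x : K => F (x + a) + F x = b)).card
          ≤ ({x₀, x₀ + a} : Finset K).card := Finset.card_le_card hsub
        _ ≤ 2 := le_trans (Finset.card_insert_le _ _) (by simp)
end

section
/- Let G : F_{2^n} → F_{2^n} have injective restriction to C_3 = {x³ : x ∈ F_{2^n}}, let h : F_{2^n} → F_2 be a Boolean function and γ ∈ F_{2^n} nonzero. Then the function H(x) = G(x) + γ·h(x) has injective restriction to C_3 if and only if h(x³) + h(y³) = 0 for all x, y ∈ F_{2^n} satisfying G(x³) + G(y³) = γ. -/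
open Finset

theorem stmt8 (n : ℕ) (hn0 : 0 < n)
    (K : Type) [Field K] [Fintype K] [DecidableEq K]
    (hcard : Fintype.card K = 2 ^ n)
    (G : K → K) (hG : Set.InjOn G {y : K | ∃ x : K, y = x ^ 3})
    (h : K → K) (hval : ∀ x : K, h x = 0 ∨ h x = 1)
    (γ : K) (hγ : γ ≠ 0) :
    Set.InjOn (fun x : K => G x + γ * h x) {y : K | ∃ x : K, y = x ^ 3} ↔
      (∀ x y : K, G (x ^ 3) + G (y ^ 3) = γ → h (x ^ 3) + h (y ^ 3) = 0) := by
  have h2 : (2 : K) = 0 := by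
    have := FiniteField.cast_card_eq_zero K
    rw [hcard] at this
    push_cast at this
    exact pow_eq_zero_iff hn0.ne' |>.mp this
  have : CharP K 2 := CharTwo.of_one_ne_zero_of_two_eq_zero one_ne_zero h2
  have addself : ∀ a : K, a + a = 0 := CharTwo.add_self_eq_zero
  have addzero : ∀ a b : K, a + b = 0 ↔ a = b := by
    intro a b
    constructor
    · intro hab
      have := CharTwo.add_eq_iff_eq_add.mp hab
      simpa using this
    · rintro rfl; exact addself a
  constructor
  · intro hinj x y hxy
    rw [addzero]
    by_contra hne
    have hx : (x ^ 3 : K) ∈ {y : K | ∃ x : K, y = x ^ 3} := ⟨x, rfl⟩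
    have hy : (y ^ 3 : K) ∈ {y : K | ∃ x : K, y = x ^ 3} := ⟨y, rfl⟩
    have heq : G (x ^ 3) + γ * h (x ^ 3) = G (y ^ 3) + γ * h (y ^ 3) := by
      rcases hval (x ^ 3) with ha | ha <;> rcases hval (y ^ 3) with hb | hb
      · exact absurd (ha.trans hb.symm) hne
      · rw [ha, hb]
        have : G (x ^ 3) = G (y ^ 3) + γ := by
          rw [← addzero] at hxy ⊢
          linear_combination hxy
        rw [this]; ring
      · rw [ha, hb]
        have : G (x ^ 3) + γ = G (y ^ 3) := by
          rw [← addzero] at hxy ⊢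
          linear_combination hxy
        rw [← this]; ring
      · exact absurd (ha.trans hb.symm) hne
    have := hinj hx hy heq
    have hG' := hG hx hy
    rw [this] at hxy
    rw [addself] at hxy
    exact hγ hxy.symm
  · intro hcond a ha b hb hab
    obtain ⟨x, rfl⟩ := ha
    obtain ⟨y, rfl⟩ := hb
    simp only at hab
    rcases eq_or_ne (h (x ^ 3)) (h (y ^ 3)) with hhe | hhe
    · apply hG ⟨x, rfl⟩ ⟨y, rfl⟩
      rw [hhe] at hab
      exact add_right_cancel hab
    · exfalso
      have hGγ : G (x ^ 3) + G (y ^ 3) = γ := by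
        rcases hval (x ^ 3) with ha | ha <;> rcases hval (y ^ 3) with hb | hb
        · exact absurd (ha.trans hb.symm) hhe
        · rw [ha, hb] at hab
          exact (addzero _ _).mp (by linear_combination hab + (G (y ^ 3) + γ) * h2)
        · rw [ha, hb] at hab
          exact (addzero _ _).mp (by linear_combination hab + G (y ^ 3) * h2)
        · exact absurd (ha.trans hb.symm) hhe
      exact hhe ((addzero _ _).mp (hcond x y hGγ))
end

section
/- Fix G : F_{2^n} → F_{2^n} with injective restriction to C_3 = {x³ : x ∈ F_{2^n}} and nonzero γ ∈ F_{2^n}. The set S = { h : F_{2^n} → F_2 | the function x ↦ G(x) + γ·h(x) is injective on C_3 } is an F_2-subspace of the space of all Boolean functions on F_{2^n} under pointwise addition. -/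
/-!
In characteristic 2, `G x + γ h(x) = G y + γ h(y)` is equivalent to `G x + G y = γ (h x + h y)`.
Since `G` is injective on the cubes, a collision of distinct cubes forces `h x ≠ h y`, i.e.
`G x + G y = γ`. So `h` is admissible exactly when it takes equal values on every pair of cubes
with `G x + G y = γ`, and the functions constant on prescribed pairs form a subspace.
-/

variable {α K : Type*}

namespace Submodule

variable (R M : Type*) [Semiring R] [AddCommMonoid M] [Module R M]

def eqOnRel (r : α → α → Prop) : Submodule R (α → M) where
  carrier := {f | ∀ x y, r x y → f x = f y}
  add_mem' hf hg x y hxy := by simp only [Pi.add_apply, hf x y hxy, hg x y hxy]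
  zero_mem' _ _ _ := rfl
  smul_mem' c f hf x y hxy := by simp only [Pi.smul_apply, hf x y hxy]

variable {R M}

@[simp]
theorem mem_eqOnRel {r : α → α → Prop} {f : α → M} :
    f ∈ eqOnRel R M r ↔ ∀ x y, r x y → f x = f y :=
  Iff.rfl

end Submodule

section CharTwo

variable [CommRing K] [CharP K 2]

theorem add_mul_cast_eq_add_mul_cast_iff {u v γ : K} {a b : ZMod 2} :
    u + γ * (ZMod.cast a : K) = v + γ * (ZMod.cast b : K) ↔
      u + v = γ * (ZMod.cast (a + b) : K) := by
  rw [ZMod.cast_add (dvd_refl 2), mul_add, ← CharTwo.add_eq_zero,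
    ← CharTwo.add_eq_zero (a := u + v)]
  constructor <;> intro h <;> linear_combination h

theorem injOn_add_mul_cast_iff {S : Set α} {G : α → K} (hG : Set.InjOn G S) (γ : K)
    (h : α → ZMod 2) :
    Set.InjOn (fun x => G x + γ * (ZMod.cast (h x) : K)) S ↔
      ∀ x ∈ S, ∀ y ∈ S, G x + G y = γ → h x = h y := by
  have add_eq_one_of_ne : ∀ a b : ZMod 2, a ≠ b → a + b = 1 := by decide
  constructor
  · intro hinj x hx y hy hsum
    by_contra hne
    refine hne (congrArg h (hinj hx hy ?_))
    rw [add_mul_cast_eq_add_mul_cast_iff, add_eq_one_of_ne _ _ hne, ZMod.cast_one', mul_one, hsum]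
  · intro hconst x hx y hy hxy
    rw [add_mul_cast_eq_add_mul_cast_iff] at hxy
    by_cases heq : h x = h y
    · rw [heq, CharTwo.add_self_eq_zero, ZMod.cast_zero, mul_zero, CharTwo.add_eq_zero] at hxy
      exact hG hx hy hxy
    · rw [add_eq_one_of_ne _ _ heq, ZMod.cast_one', mul_one] at hxy
      exact absurd (hconst x hx y hy hxy) heq

end CharTwo

theorem stmt9_general (n : ℕ)
    (K : Type) [Field K] [Fintype K]
    (hcard : Fintype.card K = 2 ^ n)
    (G : K → K) (hG : Set.InjOn G {y : K | ∃ x : K, y = x ^ 3})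
    (γ : K) :
    ∃ W : Submodule (ZMod 2) (K → ZMod 2),
      (W : Set (K → ZMod 2)) =
        {h : K → ZMod 2 |
          Set.InjOn (fun x : K => G x + γ * (ZMod.cast (h x) : K))
            {y : K | ∃ x : K, y = x ^ 3}} := by
  have : CharP K 2 := charP_of_card_eq_prime_pow hcard
  set C := {y : K | ∃ x : K, y = x ^ 3}
  refine ⟨Submodule.eqOnRel (ZMod 2) (ZMod 2) fun x y => x ∈ C ∧ y ∈ C ∧ G x + G y = γ, ?_⟩
  ext h
  simp only [SetLike.mem_coe, Submodule.mem_eqOnRel, Set.mem_ofPred_eq,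
    injOn_add_mul_cast_iff hG, and_imp]
  exact ⟨fun H x hx y => H x y hx, fun H x y hx => H x hx y⟩

theorem stmt9 (n : ℕ) (hn0 : 0 < n)
    (K : Type) [Field K] [Fintype K] [DecidableEq K]
    (hcard : Fintype.card K = 2 ^ n)
    (G : K → K) (hG : Set.InjOn G {y : K | ∃ x : K, y = x ^ 3})
    (γ : K) (hγ : γ ≠ 0) :
    ∃ W : Submodule (ZMod 2) (K → ZMod 2),
      (W : Set (K → ZMod 2)) =
        {h : K → ZMod 2 |
          Set.InjOn (fun x : K => G x + γ * (ZMod.cast (h x) : K))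
            {y : K | ∃ x : K, y = x ^ 3}} :=
  stmt9_general n K hcard G hG γ
end

section
/- Let p be a prime, n an even positive integer, and t ∈ F_{p^n}. The equation x + x^p = t has a solution in F_{p^n} if and only if the sum Σ_{i even, 0 ≤ i ≤ n-2} t^{p^i} lies in F_p; and when it has solutions, it has exactly p solutions. -/
/-!
The map `φ x = x + x ^ p` is additive and its kernel consists of roots of `X ^ p + X`, so it
has at most `p` elements. Write `n = 2 m` and `S y = ∑_{i < m} y ^ p ^ (2 i)`. Then
`S (φ x) = ∑_{j < n} x ^ p ^ j` is the absolute trace of `x`, an element of `𝔽_p`, so the image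
of `φ` lies in `Z = {y | S y ^ p = S y}`, the zero set of a nonzero polynomial of degree
`p ^ (n - 1)`. As `|im φ| · |ker φ| = p ^ n`, both bounds are attained: `im φ = Z`, and each
fibre of `φ` has `p` elements.
-/

open Finset Polynomial

lemma Polynomial.card_filter_eval_eq_zero_le_natDegree {R : Type*} [CommRing R] [IsDomain R]
    [Fintype R] [DecidableEq R] {P : R[X]} (hP : P ≠ 0) : #{x | P.eval x = 0} ≤ P.natDegree :=
  card_le_degree_of_subset_roots fun x hx ↦ (mem_roots hP).2 (by simpa using hx)

lemma Polynomial.monic_sum_X_pow_of_strictMono {R : Type*} [Semiring R] [Nontrivial R]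
    {e : ℕ → ℕ} (he : StrictMono e) (m : ℕ) :
    (∑ i ∈ range (m + 1), (X : R[X]) ^ e i).Monic ∧
      (∑ i ∈ range (m + 1), (X : R[X]) ^ e i).natDegree = e m := by
  induction m with
  | zero => simp
  | succ m ih =>
    have hlt : (∑ i ∈ range (m + 1), (X : R[X]) ^ e i).natDegree <
        (X ^ e (m + 1) : R[X]).natDegree := by
      rw [ih.2, natDegree_X_pow]
      exact he m.lt_succ_self
    rw [sum_range_succ]
    exact ⟨(monic_X_pow _).add_of_right (degree_lt_degree hlt),
      (natDegree_add_eq_right_of_natDegree_lt hlt).trans (natDegree_X_pow _)⟩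

lemma AddMonoidHom.card_image_mul_card_fiber {G M : Type*} [AddGroup G] [Fintype G] [AddMonoid M]
    [DecidableEq M] (f : G →+ M) (x : G) :
    #(univ.image f) * #{g | f g = f x} = Fintype.card G := by
  calc #(univ.image f) * #{g | f g = f x} = ∑ y ∈ univ.image f, #{g | f g = y} := by
        refine (sum_const_nat fun y hy ↦ ?_).symm
        obtain ⟨g, -, rfl⟩ := mem_image.1 hy
        exact AddMonoidHom.card_fiber_eq_of_mem_range f ⟨g, rfl⟩ ⟨x, rfl⟩
    _ = Fintype.card G :=
        (card_eq_sum_card_fiberwise fun g _ ↦ mem_image_of_mem f (mem_univ g)).symm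

lemma sum_add_pow_char_pow_two_mul {R : Type*} [CommSemiring R] {p : ℕ} [ExpChar R p]
    (x : R) (m : ℕ) :
    ∑ i ∈ range m, (x + x ^ p) ^ p ^ (2 * i) = ∑ j ∈ range (2 * m), x ^ p ^ j := by
  induction m with
  | zero => simp
  | succ m ih =>
    rw [sum_range_succ, ih, add_pow_expChar_pow, ← pow_mul, ← pow_succ', mul_add_one,
      sum_range_succ, sum_range_succ, add_assoc]

lemma exists_natCast_eq_sum_pow_pow {K : Type*} [Field K] [Fintype K] {p : ℕ} [hp : Fact p.Prime]
    [CharP K p] {n : ℕ} (hcard : Fintype.card K = p ^ n) (x : K) :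
    ∃ c : ℕ, ∑ j ∈ range n, x ^ p ^ j = c := by
  let := ZMod.algebra K p
  have hrank : Module.finrank (ZMod p) K = n := by
    have := Module.card_eq_pow_finrank (K := ZMod p) (V := K)
    rw [hcard, ZMod.card] at this
    exact (Nat.pow_right_injective hp.out.two_le this).symm
  refine ⟨(Algebra.trace (ZMod p) K x).val, ?_⟩
  have htrace := FiniteField.algebraMap_trace_eq_sum_pow (ZMod p) K x
  rw [hrank, Nat.card_zmod] at htrace
  rw [← htrace, ← map_natCast (algebraMap (ZMod p) K), ZMod.natCast_zmod_val]

lemma card_filter_add_pow_eq_zero_le {R : Type*} [CommRing R] [IsDomain R] [Fintype R]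
    [DecidableEq R] {p : ℕ} (hp : 1 < p) : #{x : R | x + x ^ p = 0} ≤ p := by
  have hmonic : (X ^ p + X : R[X]).Monic := monic_X_pow_add (by simpa using hp)
  calc #{x : R | x + x ^ p = 0} = #{x | (X ^ p + X : R[X]).eval x = 0} := by simp [add_comm]
    _ ≤ (X ^ p + X : R[X]).natDegree := card_filter_eval_eq_zero_le_natDegree hmonic.ne_zero
    _ = p := by rw [natDegree_add_eq_left_of_natDegree_lt (by simpa using hp), natDegree_X_pow]

lemma card_filter_sum_pow_pow_two_mul_fixed_le {R : Type*} [CommRing R] [IsDomain R] [Fintype R]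
    [DecidableEq R] {p : ℕ} (hp : 1 < p) (m : ℕ) :
    #{y : R | (∑ i ∈ range (m + 1), y ^ p ^ (2 * i)) ^ p = ∑ i ∈ range (m + 1), y ^ p ^ (2 * i)}
      ≤ p ^ (2 * m + 1) := by
  set Q : R[X] := ∑ i ∈ range (m + 1), X ^ p ^ (2 * i)
  obtain ⟨hQ, hQdeg⟩ : Q.Monic ∧ Q.natDegree = p ^ (2 * m) :=
    monic_sum_X_pow_of_strictMono (fun _ _ h ↦ Nat.pow_lt_pow_right hp (by omega)) m
  have hlt : Q.natDegree < (Q ^ p).natDegree := by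
    rw [hQ.natDegree_pow, hQdeg]
    exact lt_mul_left (by positivity) hp
  have hmonic : (Q ^ p - Q).Monic := (hQ.pow p).sub_of_left (degree_lt_degree hlt)
  calc _ = #{y | (Q ^ p - Q).eval y = 0} := by simp [Q, sub_eq_zero, eval_finsetSum]
    _ ≤ (Q ^ p - Q).natDegree := card_filter_eval_eq_zero_le_natDegree hmonic.ne_zero
    _ = p ^ (2 * m + 1) := by
      rw [natDegree_sub_eq_left_of_natDegree_lt hlt, hQ.natDegree_pow, hQdeg]
      ring

section FiniteField

variable {K : Type*} [Field K] [Fintype K] {p : ℕ} [hp : Fact p.Prime] [CharP K p]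

lemma exists_natCast_eq_sum_add_pow {m : ℕ} (hcard : Fintype.card K = p ^ (2 * m)) (x : K) :
    ∃ c : ℕ, ∑ i ∈ range m, (x + x ^ p) ^ p ^ (2 * i) = c := by
  rw [sum_add_pow_char_pow_two_mul]
  exact exists_natCast_eq_sum_pow_pow hcard x

lemma exists_add_pow_eq_and_card_fiber [DecidableEq K] {m : ℕ}
    (hcard : Fintype.card K = p ^ (2 * (m + 1))) :
    (∀ y : K, (∑ i ∈ range (m + 1), y ^ p ^ (2 * i)) ^ p = ∑ i ∈ range (m + 1), y ^ p ^ (2 * i) →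
        ∃ x, x + x ^ p = y) ∧
      ∀ x₀ : K, #{x : K | x + x ^ p = x₀ + x₀ ^ p} = p := by
  let φ : K →+ K := AddMonoidHom.mk' (fun x ↦ x + x ^ p) fun a b ↦ by rw [add_pow_char]; ring
  let Z : Finset K :=
    {y | (∑ i ∈ range (m + 1), y ^ p ^ (2 * i)) ^ p = ∑ i ∈ range (m + 1), y ^ p ^ (2 * i)}
  have hsub : univ.image φ ⊆ Z := by
    intro y hy
    obtain ⟨x, -, rfl⟩ := mem_image.1 hy
    obtain ⟨c, hc⟩ := exists_natCast_eq_sum_add_pow hcard x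
    simp only [Z, φ, mem_filter, mem_univ, true_and, AddMonoidHom.mk'_apply, hc]
    rw [← frobenius_def, map_natCast]
  have hmul : #(univ.image φ) * #{x | φ x = φ 0} = p ^ (2 * m + 1) * p := by
    rw [φ.card_image_mul_card_fiber, hcard]; ring
  have hker : #{x | φ x = φ 0} ≤ p := by
    simpa [φ, hp.out.ne_zero] using card_filter_add_pow_eq_zero_le (R := K) hp.out.one_lt
  have himage : #(univ.image φ) ≤ p ^ (2 * m + 1) :=
    (card_le_card hsub).trans (card_filter_sum_pow_pow_two_mul_fixed_le hp.out.one_lt m)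
  have hker_eq : #{x | φ x = φ 0} = p := by
    by_contra hne
    have hlt := lt_of_le_of_ne hker hne
    have := Nat.mul_le_mul_right #{x | φ x = φ 0} himage
    have := Nat.mul_lt_mul_of_pos_left hlt (pow_pos hp.out.pos (2 * m + 1))
    omega
  have himage_eq : univ.image φ = Z := eq_of_subset_of_card_le hsub <| by
    rw [hker_eq] at hmul
    rw [Nat.eq_of_mul_eq_mul_right hp.out.pos hmul]
    exact card_filter_sum_pow_pow_two_mul_fixed_le hp.out.one_lt m
  refine ⟨fun y hy ↦ ?_, fun x₀ ↦ ?_⟩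
  · obtain ⟨x, -, hx⟩ := mem_image.1 (himage_eq ▸ (by simpa [Z] using hy : y ∈ Z))
    exact ⟨x, hx⟩
  · exact (AddMonoidHom.card_fiber_eq_of_mem_range φ ⟨x₀, rfl⟩ ⟨0, rfl⟩).trans hker_eq

end FiniteField

theorem stmt10 (p n : ℕ) (hp : p.Prime) (hn : Even n) (hn0 : 0 < n)
    (K : Type) [Field K] [Fintype K] [DecidableEq K]
    (hcard : Fintype.card K = p ^ n) (t : K) :
    ((∃ x : K, x + x ^ p = t) ↔
      ∃ c : ℕ, (∑ i ∈ Finset.range (n / 2), t ^ (p ^ (2 * i))) = (c : K)) ∧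
    ((∃ x : K, x + x ^ p = t) →
      (Finset.univ.filter (fun x : K => x + x ^ p = t)).card = p) := by
  have := Fact.mk hp
  have := charP_of_card_eq_prime_pow hcard
  obtain ⟨m, rfl⟩ : ∃ m, n = 2 * (m + 1) := by
    obtain ⟨k, rfl⟩ := hn
    exact ⟨k - 1, by omega⟩
  rw [show 2 * (m + 1) / 2 = m + 1 by omega]
  obtain ⟨hsurj, hfiber⟩ := exists_add_pow_eq_and_card_fiber hcard
  refine ⟨⟨?_, fun ⟨c, hc⟩ ↦ hsurj t ?_⟩, ?_⟩
  · rintro ⟨x, rfl⟩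
    exact exists_natCast_eq_sum_add_pow hcard x
  · rw [hc, ← frobenius_def, map_natCast]
  · rintro ⟨x, rfl⟩
    exact hfiber x
end

section
/- Let F(x) = G(x³) be a quadratic APN function on F_{2^n} with n even, where G is injective on the nonzero cubes C_3. Then every Walsh coefficient W_F(a,b) = Σ_{x ∈ F_{2^n}} (-1)^{Tr(aF(x)+bx)} with a ≠ 0 lies in the set {0, ±2^{n/2}, ±2^{n/2+1}}. -/
open Finset

private lemma zmod2_pow_add (s t : ZMod 2) :
    ((-1 : ℤ)) ^ (s + t).val = (-1 : ℤ) ^ s.val * (-1 : ℤ) ^ t.val := by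
  revert s t; decide

private lemma zmod2_pow_one : ((-1 : ℤ)) ^ ((1 : ZMod 2)).val = -1 := by decide

private lemma zmod2_eq_one (s : ZMod 2) (h : s ≠ 0) : s = 1 := by revert s; decide

private lemma char_sum_zero {K : Type} [Fintype K] (n : ℕ)
    (hcard : Fintype.card K = 2 ^ n) (g : K → ZMod 2) (h : ∀ x, g x = 0) :
    (∑ x : K, (-1 : ℤ) ^ (g x).val) = 2 ^ n := by
  have : ∀ x : K, (-1 : ℤ) ^ (g x).val = 1 := by
    intro x; rw [h x]; rfl
  rw [Finset.sum_congr rfl (fun x _ => this x), Finset.sum_const, Finset.card_univ, hcard]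
  simp

private lemma char_sum_ne {K : Type} [Fintype K] [AddGroup K] [DecidableEq K]
    (g : K → ZMod 2) (hadd : ∀ x y : K, g (x + y) = g x + g y)
    (h : ∃ x₀, g x₀ ≠ 0) :
    (∑ x : K, (-1 : ℤ) ^ (g x).val) = 0 := by
  obtain ⟨x₀, hx₀⟩ := h
  have h1 : g x₀ = 1 := zmod2_eq_one _ hx₀
  have e1 : (∑ x : K, (-1 : ℤ) ^ (g (x + x₀)).val) = ∑ x : K, (-1 : ℤ) ^ (g x).val := by
    apply Fintype.sum_equiv (Equiv.addRight x₀)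
    intro x
    rw [Equiv.coe_addRight]
  have e2 : ∀ x : K, (-1 : ℤ) ^ (g (x + x₀)).val = -((-1 : ℤ) ^ (g x).val) := by
    intro x
    rw [hadd, zmod2_pow_add, h1, zmod2_pow_one]
    ring
  have e3 : (∑ x : K, (-1 : ℤ) ^ (g (x + x₀)).val) = -∑ x : K, (-1 : ℤ) ^ (g x).val := by
    rw [Finset.sum_congr rfl (fun x _ => e2 x), Finset.sum_neg_distrib]
  have := e1.symm.trans e3
  omega

private lemma orb3 {K : Type} [Field K] [Fintype K] [DecidableEq K]
    (ω : K) (hω1 : ω ≠ 1) (hω3 : ω * ω * ω = 1)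
    (f : K → ℤ) (hf : ∀ x, f (ω * x) = f x) :
    (3 : ℤ) ∣ ∑ x ∈ univ.erase (0 : K), f x := by
  have hω0 : ω ≠ 0 := by
    intro h; rw [h] at hω3; simp at hω3
  suffices H : ∀ (N : ℕ) (S : Finset K), S.card ≤ N → (0 : K) ∉ S →
      (∀ x ∈ S, ω * x ∈ S) → (3 : ℤ) ∣ ∑ x ∈ S, f x by
    refine H ((univ.erase (0 : K)).card) _ le_rfl (notMem_erase _ _) ?_
    intro x hx
    rw [mem_erase] at hx ⊢
    exact ⟨mul_ne_zero hω0 hx.1, mem_univ _⟩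
  intro N
  induction N with
  | zero =>
    intro S hS _ _
    rw [Finset.card_eq_zero.mp (Nat.le_zero.mp hS)]
    simp
  | succ N ih =>
    intro S hS h0 hcl
    rcases S.eq_empty_or_nonempty with hE | ⟨u, hu⟩
    · rw [hE]; simp
    have hu0 : u ≠ 0 := fun h => h0 (h ▸ hu)
    have hd1 : ω * u ≠ u := by
      intro h
      exact hω1 (mul_right_cancel₀ hu0 (by rw [one_mul]; exact h))
    have hd2 : ω * (ω * u) ≠ u := by
      intro h
      have h' : (ω * ω) * u = 1 * u := by rw [one_mul, mul_assoc]; exact h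
      have h2 : ω * ω = 1 := mul_right_cancel₀ hu0 h'
      rw [h2, one_mul] at hω3
      exact hω1 hω3
    have hd3 : ω * (ω * u) ≠ ω * u := by
      intro h
      exact hd1 (mul_left_cancel₀ hω0 h)
    set T : Finset K := {u, ω * u, ω * (ω * u)} with hT
    have hTsub : T ⊆ S := by
      rw [hT]
      refine Finset.insert_subset hu (Finset.insert_subset (hcl u hu) ?_)
      simp only [Finset.singleton_subset_iff]
      exact hcl _ (hcl u hu)
    have hnm1 : u ∉ ({ω * u, ω * (ω * u)} : Finset K) := by
      simp only [mem_insert, mem_singleton]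
      push_neg
      exact ⟨fun h => hd1 h.symm, fun h => hd2 h.symm⟩
    have hnm2 : ω * u ∉ ({ω * (ω * u)} : Finset K) := by
      simp only [mem_singleton]
      exact fun h => hd3 h.symm
    have hTcard : T.card = 3 := by
      rw [hT, Finset.card_insert_of_notMem hnm1, Finset.card_insert_of_notMem hnm2,
        Finset.card_singleton]
    have hsumT : ∑ x ∈ T, f x = 3 * f u := by
      rw [hT, Finset.sum_insert hnm1, Finset.sum_insert hnm2, Finset.sum_singleton]
      rw [hf u, hf (ω * u), hf u]
      ring
    have h3le : 3 ≤ S.card := hTcard ▸ Finset.card_le_card hTsub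
    have hrec : (3 : ℤ) ∣ ∑ x ∈ S \ T, f x := by
      apply ih
      · rw [Finset.card_sdiff_of_subset hTsub, hTcard]
        omega
      · intro h
        exact h0 (Finset.mem_sdiff.mp h).1
      · intro x hx
        rw [Finset.mem_sdiff] at hx ⊢
        obtain ⟨hxS, hxT⟩ := hx
        refine ⟨hcl x hxS, ?_⟩
        intro hmem
        rw [hT] at hmem
        simp only [mem_insert, mem_singleton] at hmem
        rcases hmem with h | h | h
        · apply hxT
          have hx2 : x = ω * (ω * u) := by
            calc x = 1 * x := (one_mul x).symm
            _ = (ω * ω * ω) * x := by rw [hω3]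
            _ = ω * (ω * (ω * x)) := by ring
            _ = ω * (ω * u) := by rw [h]
          rw [hT, hx2]
          simp
        · apply hxT
          have hx2 : x = u := mul_left_cancel₀ hω0 h
          rw [hT, hx2]; simp
        · apply hxT
          have hx2 : x = ω * u := mul_left_cancel₀ hω0 h
          rw [hT, hx2]; simp
    have hsplit : ∑ x ∈ S \ T, f x + ∑ x ∈ T, f x = ∑ x ∈ S, f x :=
      Finset.sum_sdiff hTsub
    rw [← hsplit, hsumT]
    exact dvd_add hrec ⟨f u, by ring⟩

private lemma zmod2_eq_zero (s : ZMod 2) (h : s ≠ 1) : s = 0 := by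
  revert s; decide

set_option maxHeartbeats 1000000 in
private lemma main_core (n m : ℕ) (hm : n = m + m)
    (K : Type) [Field K] [Fintype K] [DecidableEq K]
    (hcard : Fintype.card K = 2 ^ n)
    (Tr : K → ZMod 2) (hadd : ∀ z w : K, Tr (z + w) = Tr z + Tr w)
    (hone : ∃ z : K, Tr z = 1)
    (ω : K) (hω3 : ω ^ 3 = 1) (hω1 : ω ≠ 1)
    (F : K → K) (hF0 : F 0 = 0) (hFω : ∀ x, F (ω * x) = F x)
    (htri : ∀ x y : K, F y = F x → y = x ∨ y = ω * x ∨ y = ω ^ 2 * x)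
    (hq : ∀ u x y : K, F (x + y + u) + F (x + y) + F u
        = (F (x + u) + F x + F u) + (F (y + u) + F y + F u))
    (h2 : ∀ z : K, z + z = 0) :
    ∀ a : K, a ≠ 0 → ∀ b : K,
      (∑ x : K, (-1 : ℤ) ^ (Tr (a * F x + b * x)).val)
        ∈ ({0, 2 ^ m, -(2 ^ m), 2 ^ (m + 1), -(2 ^ (m + 1))} : Set ℤ) := by
  -- basic facts
  have hω0 : ω ≠ 0 := by
    intro h; rw [h] at hω3; simp at hω3
  have hsum : ω ^ 2 + ω + 1 = 0 := by
    have hfac : (ω - 1) * (ω ^ 2 + ω + 1) = ω ^ 3 - 1 := by ring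
    rw [hω3, sub_self] at hfac
    rcases mul_eq_zero.mp hfac with h | h
    · exact absurd (sub_eq_zero.mp h) hω1
    · exact h
  have Tr0 : Tr 0 = 0 := by
    have h := hadd 0 0
    rw [add_zero] at h
    exact (left_eq_add.mp h)
  have chi0 : (-1 : ℤ) ^ (Tr 0).val = 1 := by rw [Tr0]; rfl
  have hchi : ∀ z w : K, (-1:ℤ) ^ (Tr (z + w)).val
      = (-1:ℤ) ^ (Tr z).val * (-1:ℤ) ^ (Tr w).val := by
    intro z w; rw [hadd]; exact zmod2_pow_add _ _
  -- the bilinear form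
  set B : K → K → K := fun u x => F (x + u) + F x + F u with hB
  have hBx : ∀ u x y : K, B u (x + y) = B u x + B u y := by
    intro u x y
    simp only [hB]
    exact hq u x y
  have hBsymm : ∀ u x : K, B u x = B x u := by
    intro u x; simp only [hB]; rw [add_comm x u]; ring
  have hBu : ∀ u v x : K, B (u + v) x = B u x + B v x := by
    intro u v x
    rw [hBsymm (u+v) x, hBx x u v, hBsymm x u, hBsymm x v]
  -- the linear-structure sets
  set E : K → Finset K := fun a => univ.filter (fun u => ∀ x : K, Tr (a * B u x) = 0) with hE
  have hmemE : ∀ a u : K, u ∈ E a ↔ ∀ x : K, Tr (a * B u x) = 0 := by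
    intro a u; simp [hE]
  have hEadd : ∀ a u v : K, u ∈ E a → v ∈ E a → u + v ∈ E a := by
    intro a u v hu hv
    rw [hmemE] at hu hv ⊢
    intro x
    rw [hBu, mul_add, hadd, hu x, hv x]
    rfl
  have hEtr : ∀ a u : K, u ∈ E a → Tr (a * F u) = 0 := by
    intro a u hu
    rw [hmemE] at hu
    have key : ∀ v : K, Tr (a * F (u + v)) = Tr (a * F u) + Tr (a * F v) := by
      intro v
      have hFuv : F (u + v) = B u v + F v + F u := by
        simp only [hB]
        rw [add_comm v u]
        linear_combination - h2 (F v) - h2 (F u)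
      rw [hFuv, mul_add, mul_add, hadd, hadd, hu v, zero_add]
      exact add_comm _ _
    have huu : u + ω * u = ω ^ 2 * u := by
      linear_combination u * hsum - h2 (ω ^ 2 * u)
    have h1 : Tr (a * F (ω ^ 2 * u)) = Tr (a * F u) + Tr (a * F (ω * u)) := by
      rw [← huu]; exact key (ω * u)
    have h3 : F (ω ^ 2 * u) = F u := by
      have hh : ω ^ 2 * u = ω * (ω * u) := by ring
      rw [hh, hFω, hFω]
    rw [hFω, h3] at h1
    exact (left_eq_add.mp h1)
  -- Walsh square formula
  have hWsq : ∀ A b' : K, (∑ x : K, (-1:ℤ) ^ (Tr (A * F x + b' * x)).val) ^ 2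
      = 2 ^ n * ∑ u ∈ E A, (-1:ℤ) ^ (Tr (b' * u)).val := by
    intro A b'
    rw [sq, Finset.sum_mul_sum]
    have step1 : ∀ x : K,
        (∑ y : K, (-1:ℤ) ^ (Tr (A * F x + b' * x)).val * (-1:ℤ) ^ (Tr (A * F y + b' * y)).val)
        = ∑ u : K, (-1:ℤ) ^ (Tr (A * B u x)).val * (-1:ℤ) ^ (Tr (A * F u + b' * u)).val := by
      intro x
      refine (Fintype.sum_equiv (Equiv.addLeft x) _ _ ?_).symm
      intro u
      simp only [Equiv.coe_addLeft]
      rw [← hchi, ← hchi]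
      have harg : A * B u x + (A * F u + b' * u)
          = (A * F x + b' * x) + (A * F (x + u) + b' * (x + u)) := by
        simp only [hB]
        linear_combination h2 (A * F u) - h2 (b' * x)
      rw [harg]
    rw [Finset.sum_congr rfl (fun x _ => step1 x)]
    rw [Finset.sum_comm]
    have step2 : ∀ u : K,
        (∑ x : K, (-1:ℤ) ^ (Tr (A * B u x)).val * (-1:ℤ) ^ (Tr (A * F u + b' * u)).val)
        = (∑ x : K, (-1:ℤ) ^ (Tr (A * B u x)).val) * (-1:ℤ) ^ (Tr (A * F u + b' * u)).val := by
      intro u; rw [Finset.sum_mul]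
    rw [Finset.sum_congr rfl (fun u _ => step2 u)]
    have hsplit := Finset.sum_filter_add_sum_filter_not univ
      (fun u : K => ∀ x : K, Tr (A * B u x) = 0)
      (fun u => (∑ x : K, (-1:ℤ) ^ (Tr (A * B u x)).val)
        * (-1:ℤ) ^ (Tr (A * F u + b' * u)).val)
    rw [← hsplit]
    have hEfilter : E A = univ.filter (fun u : K => ∀ x : K, Tr (A * B u x) = 0) := by
      simp only [hE]
    have hzero2 : (∑ u ∈ univ.filter (fun u : K => ¬ ∀ x : K, Tr (A * B u x) = 0),
        (∑ x : K, (-1:ℤ) ^ (Tr (A * B u x)).val)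
          * (-1:ℤ) ^ (Tr (A * F u + b' * u)).val) = 0 := by
      apply Finset.sum_eq_zero
      intro u hu
      rw [Finset.mem_filter] at hu
      have hcne : (∑ x : K, (-1:ℤ) ^ (Tr (A * B u x)).val) = 0 := by
        apply char_sum_ne (fun x => Tr (A * B u x))
        · intro x y; rw [hBx, mul_add, hadd]
        · push_neg at hu
          exact hu.2
      rw [hcne, zero_mul]
    rw [hzero2, add_zero, ← hEfilter]
    have hmain : ∀ u ∈ E A,
        (∑ x : K, (-1:ℤ) ^ (Tr (A * B u x)).val) * (-1:ℤ) ^ (Tr (A * F u + b' * u)).val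
        = 2 ^ n * (-1:ℤ) ^ (Tr (b' * u)).val := by
      intro u hu
      have hc := char_sum_zero n hcard (fun x => Tr (A * B u x)) ((hmemE A u).mp hu)
      rw [hc]
      congr 1
      rw [hchi, hEtr A u hu]
      norm_num
    rw [Finset.sum_congr rfl hmain, ← Finset.mul_sum]
  -- dichotomy for the E-sum
  have hEsum : ∀ A b' : K, (∑ u ∈ E A, (-1:ℤ) ^ (Tr (b' * u)).val) = ((E A).card : ℤ)
      ∨ (∑ u ∈ E A, (-1:ℤ) ^ (Tr (b' * u)).val) = 0 := by
    intro A b'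
    by_cases hb : ∀ u ∈ E A, Tr (b' * u) = 0
    · left
      rw [Finset.sum_congr rfl (fun u hu => by rw [hb u hu] : ∀ u ∈ E A,
        (-1:ℤ) ^ (Tr (b' * u)).val = (-1:ℤ) ^ ((0 : ZMod 2)).val)]
      rw [Finset.sum_const]
      norm_num
    · right
      push_neg at hb
      obtain ⟨u₁, hu₁E, hu₁⟩ := hb
      have h1 : Tr (b' * u₁) = 1 := zmod2_eq_one _ hu₁
      have haddtwice : ∀ p : K, p + u₁ + u₁ = p := by
        intro p; rw [add_assoc, h2, add_zero]
      have hbij : (∑ u ∈ E A, (-1:ℤ) ^ (Tr (b' * u)).val)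
          = ∑ u ∈ E A, (-1:ℤ) ^ (Tr (b' * (u + u₁))).val := by
        apply Finset.sum_bij' (i := fun u _ => u + u₁) (j := fun u _ => u + u₁)
        · intro u hu; exact hEadd A u u₁ hu hu₁E
        · intro u hu; exact hEadd A u u₁ hu hu₁E
        · intro u _; exact haddtwice u
        · intro u _; exact haddtwice u
        · intro u _; rw [haddtwice]
      have hneg : ∀ u : K, (-1:ℤ) ^ (Tr (b' * (u + u₁))).val
          = -((-1:ℤ) ^ (Tr (b' * u)).val) := by
        intro u
        rw [mul_add, hadd, zmod2_pow_add, h1, zmod2_pow_one]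
        ring
      rw [Finset.sum_congr rfl (fun u _ => hneg u), Finset.sum_neg_distrib] at hbij
      omega
  -- zero set of F
  have hzeroiff : ∀ x : K, F x = 0 ↔ x = 0 := by
    intro x
    constructor
    · intro h
      have h' := htri 0 x (by rw [h, hF0])
      rcases h' with h' | h' | h' <;> simpa using h'
    · intro h; rw [h, hF0]
  have hfilter0 : univ.filter (fun y : K => F y = F 0) = {0} := by
    ext y
    simp only [Finset.mem_filter, Finset.mem_univ, true_and, Finset.mem_singleton, hF0]
    exact hzeroiff y
  have hω2ne1 : ω ^ 2 ≠ 1 := by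
    intro h
    have hh : ω ^ 3 = ω := by rw [pow_succ, h, one_mul]
    rw [hω3] at hh
    exact hω1 hh.symm
  have hωω : ω ^ 2 ≠ ω := by
    intro h
    have h' : ω * ω = ω * 1 := by rw [mul_one, ← pow_two]; exact h
    exact hω1 (mul_left_cancel₀ hω0 h')
  have hfilter3 : ∀ x : K, x ≠ 0 →
      (univ.filter (fun y : K => F y = F x)).card = 3 := by
    intro x hx
    have hset : univ.filter (fun y : K => F y = F x) = {x, ω * x, ω ^ 2 * x} := by
      ext y
      simp only [Finset.mem_filter, Finset.mem_univ, true_and, Finset.mem_insert,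
        Finset.mem_singleton]
      constructor
      · exact htri x y
      · rintro (h | h | h)
        · rw [h]
        · rw [h]; exact hFω x
        · rw [h]
          have hh : ω ^ 2 * x = ω * (ω * x) := by ring
          rw [hh, hFω, hFω]
    rw [hset]
    have hne1 : x ≠ ω * x := by
      intro h
      have h' : 1 * x = ω * x := by rw [one_mul]; exact h
      exact hω1 (mul_right_cancel₀ hx h').symm
    have hne2 : x ≠ ω ^ 2 * x := by
      intro h
      have h' : 1 * x = ω ^ 2 * x := by rw [one_mul]; exact h
      exact hω2ne1 (mul_right_cancel₀ hx h').symm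
    have hne3 : ω * x ≠ ω ^ 2 * x := by
      intro h
      exact hωω (mul_right_cancel₀ hx h).symm
    rw [Finset.card_insert_of_notMem, Finset.card_insert_of_notMem,
      Finset.card_singleton]
    · simp only [Finset.mem_singleton]; exact hne3
    · simp only [Finset.mem_insert, Finset.mem_singleton]; push_neg
      exact ⟨hne1, hne2⟩
  have hcount : (∑ x : K, ((univ.filter (fun y : K => F y = F x)).card : ℤ))
      = 3 * 2 ^ n - 2 := by
    rw [← Finset.add_sum_erase univ _ (mem_univ (0:K))]
    have hc0 : ((univ.filter (fun y : K => F y = F 0)).card : ℤ) = 1 := by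
      rw [hfilter0]; simp
    rw [hc0]
    have hcx : ∀ x ∈ univ.erase (0:K),
        ((univ.filter (fun y : K => F y = F x)).card : ℤ) = 3 := by
      intro x hx
      rw [hfilter3 x (Finset.mem_erase.mp hx).1]
      norm_num
    rw [Finset.sum_congr rfl hcx, Finset.sum_const,
      Finset.card_erase_of_mem (mem_univ _), Finset.card_univ, hcard]
    have h1 : (1:ℕ) ≤ 2 ^ n := Nat.one_le_two_pow
    rw [nsmul_eq_mul, Nat.cast_sub h1]
    push_cast
    ring
  -- component Walsh values at b = 0
  set w : K → ℤ := fun A => ∑ x : K, (-1:ℤ) ^ (Tr (A * F x)).val with hw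
  have hWsq0 : ∀ A : K, (w A) ^ 2 = 2 ^ n * ((E A).card : ℤ) := by
    intro A
    have h0 : w A = ∑ x : K, (-1:ℤ) ^ (Tr (A * F x + 0 * x)).val := by
      simp only [hw, zero_mul, add_zero]
    rw [h0, hWsq A 0]
    congr 1
    have hz : ∀ u ∈ E A, (-1:ℤ) ^ (Tr ((0:K) * u)).val
        = (-1:ℤ) ^ ((0 : ZMod 2)).val := by
      intro u _; rw [zero_mul, Tr0]
    rw [Finset.sum_congr rfl hz, Finset.sum_const]
    norm_num
  have hw1 : ∀ A : K, (3:ℤ) ∣ w A - 1 := by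
    intro A
    have hmul : ω * ω * ω = 1 := by
      have hh : ω * ω * ω = ω ^ 3 := by ring
      rw [hh, hω3]
    have horb := orb3 ω hω1 hmul (fun x => (-1:ℤ) ^ (Tr (A * F x)).val)
      (fun x => show (-1:ℤ) ^ (Tr (A * F (ω * x))).val
        = (-1:ℤ) ^ (Tr (A * F x)).val by rw [hFω])
    have hsplitw : w A = (-1:ℤ) ^ (Tr (A * F 0)).val
        + ∑ x ∈ univ.erase 0, (-1:ℤ) ^ (Tr (A * F x)).val := by
      rw [hw]
      exact (Finset.add_sum_erase univ _ (mem_univ 0)).symm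
    rw [hsplitw, hF0, mul_zero, chi0]
    have hh : (1:ℤ) + (∑ x ∈ univ.erase (0:K), (-1:ℤ) ^ (Tr (A * F x)).val) - 1
        = ∑ x ∈ univ.erase (0:K), (-1:ℤ) ^ (Tr (A * F x)).val := by ring
    rw [hh]
    exact horb
  -- first moment
  have hI1 : (∑ A : K, w A) = 2 ^ n := by
    simp only [hw]
    rw [Finset.sum_comm]
    have hin : ∀ x : K, (∑ A : K, (-1:ℤ) ^ (Tr (A * F x)).val)
        = if x = 0 then (2:ℤ)^n else 0 := by
      intro x
      by_cases hx : x = 0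
      · rw [if_pos hx, hx]
        apply char_sum_zero n hcard
        intro A; rw [hF0, mul_zero, Tr0]
      · rw [if_neg hx]
        apply char_sum_ne (fun A => Tr (A * F x))
        · intro p q; rw [add_mul, hadd]
        · obtain ⟨z, hz⟩ := hone
          refine ⟨z * (F x)⁻¹, ?_⟩
          have hFx : F x ≠ 0 := fun h => hx ((hzeroiff x).mp h)
          rw [mul_assoc, inv_mul_cancel₀ hFx, mul_one, hz]
          exact one_ne_zero
    rw [Finset.sum_congr rfl (fun x _ => hin x),
      Finset.sum_ite_eq' univ (0:K) (fun _ => (2:ℤ)^n), if_pos (mem_univ _)]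
  -- second moment
  have hI2 : (∑ A : K, (w A) ^ 2) = 2 ^ n * (3 * 2 ^ n - 2) := by
    have hexp : ∀ A : K, (w A) ^ 2 = ∑ x : K, ∑ y : K,
        (-1:ℤ) ^ (Tr (A * F x)).val * (-1:ℤ) ^ (Tr (A * F y)).val := by
      intro A
      simp only [hw]
      rw [sq, Finset.sum_mul_sum]
    rw [Finset.sum_congr rfl (fun A _ => hexp A)]
    rw [Finset.sum_comm]
    have hswap : ∀ x : K, (∑ A : K, ∑ y : K,
        (-1:ℤ) ^ (Tr (A * F x)).val * (-1:ℤ) ^ (Tr (A * F y)).val)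
        = ∑ y : K, ∑ A : K,
        (-1:ℤ) ^ (Tr (A * F x)).val * (-1:ℤ) ^ (Tr (A * F y)).val :=
      fun x => Finset.sum_comm
    rw [Finset.sum_congr rfl (fun x _ => hswap x)]
    have hinner : ∀ x y : K, (∑ A : K,
        (-1:ℤ) ^ (Tr (A * F x)).val * (-1:ℤ) ^ (Tr (A * F y)).val)
        = if F y = F x then (2:ℤ)^n else 0 := by
      intro x y
      have hmerge : ∀ A : K, (-1:ℤ) ^ (Tr (A * F x)).val * (-1:ℤ) ^ (Tr (A * F y)).val
          = (-1:ℤ) ^ (Tr (A * (F x + F y))).val := by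
        intro A; rw [mul_add, hchi]
      rw [Finset.sum_congr rfl (fun A _ => hmerge A)]
      by_cases hxy : F y = F x
      · rw [if_pos hxy, hxy]
        apply char_sum_zero n hcard
        intro A
        rw [h2 (F x), mul_zero, Tr0]
      · rw [if_neg hxy]
        apply char_sum_ne (fun A => Tr (A * (F x + F y)))
        · intro p q; rw [add_mul, hadd]
        · obtain ⟨z, hz⟩ := hone
          have hne : F x + F y ≠ 0 := by
            intro h
            apply hxy
            have h' : F x + (F x + F y) = F x := by rw [h, add_zero]
            rw [← add_assoc, h2, zero_add] at h'
            exact h'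
          refine ⟨z * (F x + F y)⁻¹, ?_⟩
          rw [mul_assoc, inv_mul_cancel₀ hne, mul_one, hz]
          exact one_ne_zero
    rw [Finset.sum_congr rfl
      (fun x _ => Finset.sum_congr rfl (fun y _ => hinner x y))]
    have hone_x : ∀ x : K, (∑ y : K, if F y = F x then (2:ℤ)^n else 0)
        = ((univ.filter (fun y : K => F y = F x)).card : ℤ) * 2 ^ n := by
      intro x
      rw [← Finset.sum_filter, Finset.sum_const, nsmul_eq_mul]
    rw [Finset.sum_congr rfl (fun x _ => hone_x x), ← Finset.sum_mul, hcount]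
    ring
  -- bookkeeping over nonzero a
  set Aset : Finset K := univ.erase 0 with hAset
  have hAcard : ((Aset.card : ℕ) : ℤ) = 2 ^ n - 1 := by
    rw [hAset, Finset.card_erase_of_mem (mem_univ _), Finset.card_univ, hcard]
    have h1 : (1:ℕ) ≤ 2 ^ n := Nat.one_le_two_pow
    rw [Nat.cast_sub h1]
    push_cast
    ring
  have hw00 : w 0 = 2 ^ n := by
    simp only [hw]
    apply char_sum_zero n hcard
    intro x; rw [zero_mul, Tr0]
  have hSw : (∑ A ∈ Aset, w A) = 0 := by
    have hh := Finset.add_sum_erase univ w (mem_univ (0:K))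
    rw [hw00, hI1] at hh
    rw [hAset]
    linarith
  have hSw2 : (∑ A ∈ Aset, (w A) ^ 2) = 2 ^ n * (2 * 2 ^ n - 2) := by
    have hh := Finset.add_sum_erase univ (fun A => (w A) ^ 2) (mem_univ (0:K))
    rw [hw00, hI2] at hh
    rw [hAset]
    nlinarith [hh]
  -- divisibility by 2^m and normalized values
  set R : K → ℤ := fun A => w A / 2 ^ m with hR
  have hmm : ((2:ℤ) ^ m) ^ 2 = 2 ^ n := by
    rw [← pow_mul]
    congr 1
    omega
  have hdvd : ∀ A : K, ((2:ℤ) ^ m) ∣ w A := by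
    intro A
    have hsq : (w A) ^ 2 = ((2:ℤ) ^ m) ^ 2 * ((E A).card : ℤ) := by
      rw [hWsq0 A, hmm]
    have hd2 : ((2:ℤ) ^ m) ^ 2 ∣ (w A) ^ 2 := ⟨((E A).card : ℤ), hsq⟩
    exact (Int.pow_dvd_pow_iff (two_ne_zero)).mp hd2
  have hwR : ∀ A : K, w A = 2 ^ m * R A := by
    intro A
    rw [hR]
    exact (Int.mul_ediv_cancel' (hdvd A)).symm
  have hR2 : ∀ A : K, (R A) ^ 2 = ((E A).card : ℤ) := by
    intro A
    have h := hWsq0 A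
    rw [hwR A, ← hmm] at h
    have h' : ((2:ℤ) ^ m) ^ 2 * (R A) ^ 2 = ((2:ℤ) ^ m) ^ 2 * ((E A).card : ℤ) := by
      calc ((2:ℤ) ^ m) ^ 2 * (R A) ^ 2 = (2 ^ m * R A) ^ 2 := by ring
      _ = _ := h
    exact mul_left_cancel₀ (by positivity) h'
  set T : K → ℤ := fun A => (-1) ^ m * R A with hT
  have hT2 : ∀ A : K, (T A) ^ 2 = ((E A).card : ℤ) := by
    intro A
    have hh : (T A) ^ 2 = (R A) ^ 2 := by
      simp only [hT]
      rw [mul_pow, ← pow_mul, mul_comm m 2, pow_mul]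
      norm_num
    rw [hh, hR2]
  have hTmod : ∀ A : K, (3:ℤ) ∣ T A - 1 := by
    intro A
    have hmod2 : (2:ℤ) ^ m ≡ (-1:ℤ) ^ m [ZMOD 3] :=
      Int.ModEq.pow m (by decide)
    have hmodw : w A ≡ (-1:ℤ) ^ m * R A [ZMOD 3] := by
      rw [hwR A]
      exact hmod2.mul_right (R A)
    have hw1' : w A ≡ 1 [ZMOD 3] := by
      rw [Int.modEq_iff_dvd]
      have hh := hw1 A
      omega
    have hfin : T A ≡ 1 [ZMOD 3] := by
      simp only [hT]
      exact hmodw.symm.trans hw1'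
    have := (Int.modEq_iff_dvd.mp hfin)
    omega
  have hsumR : (∑ A ∈ Aset, R A) = 0 := by
    have h := hSw
    rw [Finset.sum_congr rfl (fun A _ => hwR A), ← Finset.mul_sum] at h
    rcases mul_eq_zero.mp h with h' | h'
    · exact absurd h' (by positivity)
    · exact h'
  have hsumT : (∑ A ∈ Aset, T A) = 0 := by
    simp only [hT]
    rw [← Finset.mul_sum, hsumR, mul_zero]
  have hsumT2 : (∑ A ∈ Aset, (T A) ^ 2) = 2 * 2 ^ n - 2 := by
    have h : (∑ A ∈ Aset, (w A) ^ 2) = 2 ^ n * ∑ A ∈ Aset, (T A) ^ 2 := by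
      rw [Finset.mul_sum]
      apply Finset.sum_congr rfl
      intro A _
      rw [hWsq0 A, hT2 A]
    rw [hSw2] at h
    exact (mul_left_cancel₀ (by positivity : ((2:ℤ)^n) ≠ 0) h).symm
  have hkey : (∑ A ∈ Aset, ((T A) ^ 2 + T A - 2)) = 0 := by
    rw [Finset.sum_sub_distrib, Finset.sum_add_distrib, hsumT2, hsumT,
      Finset.sum_const, nsmul_eq_mul, hAcard]
    ring
  have hT0 : ∀ A ∈ Aset, (T A) ^ 2 + T A - 2 = 0 := by
    have hnonneg : ∀ A' ∈ Aset, (0:ℤ) ≤ (T A') ^ 2 + T A' - 2 := by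
      intro A' _
      have h3 := hTmod A'
      have hcases : T A' ≤ -2 ∨ T A' = -1 ∨ T A' = 0 ∨ 1 ≤ T A' := by omega
      rcases hcases with h | h | h | h
      · nlinarith
      · exfalso; omega
      · exfalso; omega
      · nlinarith
    exact (Finset.sum_eq_zero_iff_of_nonneg hnonneg).mp hkey
  have hNval : ∀ A ∈ Aset, ((E A).card : ℤ) = 1 ∨ ((E A).card : ℤ) = 4 := by
    intro A hA
    have h := hT0 A hA
    have hfac : (T A - 1) * (T A + 2) = 0 := by linear_combination h
    rcases mul_eq_zero.mp hfac with h' | h'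
    · left
      rw [← hT2 A]
      have hh : T A = 1 := by linarith
      rw [hh]; norm_num
    · right
      rw [← hT2 A]
      have hh : T A = -2 := by linarith
      rw [hh]; norm_num
  -- final步
  intro a ha b
  have haA : a ∈ Aset := by
    rw [hAset]; exact Finset.mem_erase.mpr ⟨ha, mem_univ _⟩
  have hWab := hWsq a b
  simp only [Set.mem_insert_iff, Set.mem_singleton_iff]
  rcases hEsum a b with hS | hS
  · rw [hS] at hWab
    rcases hNval a haA with hN | hN
    · rw [hN, mul_one, ← hmm] at hWab
      have hfac : ((∑ x : K, (-1:ℤ) ^ (Tr (a * F x + b * x)).val) - 2 ^ m)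
          * ((∑ x : K, (-1:ℤ) ^ (Tr (a * F x + b * x)).val) + 2 ^ m) = 0 := by
        linear_combination hWab
      rcases mul_eq_zero.mp hfac with h' | h'
      · right; left; linarith
      · right; right; left; linarith
    · rw [hN] at hWab
      have hmm4 : ((2:ℤ) ^ (m+1)) ^ 2 = 2 ^ n * 4 := by
        rw [← pow_mul]
        have he : (m + 1) * 2 = n + 2 := by omega
        rw [he, pow_add]
        norm_num
      rw [← hmm4] at hWab
      have hfac : ((∑ x : K, (-1:ℤ) ^ (Tr (a * F x + b * x)).val) - 2 ^ (m+1))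
          * ((∑ x : K, (-1:ℤ) ^ (Tr (a * F x + b * x)).val) + 2 ^ (m+1)) = 0 := by
        linear_combination hWab
      rcases mul_eq_zero.mp hfac with h' | h'
      · right; right; right; left; linarith
      · right; right; right; right; linarith
  · rw [hS, mul_zero] at hWab
    left
    exact pow_eq_zero_iff (two_ne_zero) |>.mp hWab

set_option maxHeartbeats 1000000 in
theorem stmt19 (n : ℕ) (hn : Even n) (hn0 : 0 < n)
    (K : Type) [Field K] [Fintype K] [DecidableEq K]
    (hcard : Fintype.card K = 2 ^ n)
    (Tr : K → ZMod 2)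
    (hTr : ∀ x : K, (ZMod.cast (Tr x) : K) = ∑ i ∈ Finset.range n, x ^ (2 ^ i))
    (G : K → K) (F : K → K) (hF : ∀ x : K, F x = G (x ^ 3))
    (hquad : ∀ a x y : K,
      F (x + y + a) - F (x + y) = (F (x + a) - F x) + (F (y + a) - F y) - (F a - F 0))
    (hapn : ∀ a : K, a ≠ 0 → ∀ b : K,
      (Finset.univ.filter (fun x : K => F (x + a) + F x = b)).card ≤ 2)
    (hinj : Set.InjOn G {y : K | ∃ x : K, y = x ^ 3}) :
    ∀ a : K, a ≠ 0 → ∀ b : K,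
      (∑ x : K, (-1 : ℤ) ^ (Tr (a * F x + b * x)).val) ∈
        ({0, 2 ^ (n / 2), -(2 ^ (n / 2)), 2 ^ (n / 2 + 1), -(2 ^ (n / 2 + 1))} : Set ℤ) := by
  obtain ⟨m, hm⟩ := hn
  -- characteristic 2
  have hp2 : ringChar K = 2 := by
    have hprime : (ringChar K).Prime := CharP.char_is_prime K (ringChar K)
    obtain ⟨k, hk, hcardp⟩ := FiniteField.card K (ringChar K)
    rw [hcard] at hcardp
    have hdvd : ringChar K ∣ 2 ^ n := by
      rw [hcardp]
      exact dvd_pow_self (ringChar K) k.pos.ne'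
    exact (Nat.prime_dvd_prime_iff_eq hprime Nat.prime_two).mp
      (hprime.dvd_of_dvd_pow hdvd)
  haveI hchar2 : CharP K 2 := by rw [← hp2]; exact ringChar.charP K
  have h2 : ∀ z : K, z + z = 0 := fun z => CharTwo.add_self_eq_zero z
  haveI : Fact (Nat.Prime 2) := ⟨Nat.prime_two⟩
  -- additivity of the trace
  have hTradd : ∀ z w : K, Tr (z + w) = Tr z + Tr w := by
    intro z w
    apply ZMod.castHom_injective K
    rw [map_add]
    simp only [ZMod.castHom_apply]
    rw [hTr, hTr, hTr, ← Finset.sum_add_distrib]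
    apply Finset.sum_congr rfl
    intro i _
    exact add_pow_char_pow z w 2 i
  -- nondegeneracy
  have hone : ∃ z : K, Tr z = 1 := by
    by_contra hno
    push_neg at hno
    have hall : ∀ z : K, Tr z = 0 := fun z => zmod2_eq_zero _ (hno z)
    set P : Polynomial K := ∑ i ∈ Finset.range n, Polynomial.X ^ (2 ^ i) with hP
    have heval : ∀ x : K, P.eval x = 0 := by
      intro x
      rw [hP, Polynomial.eval_finset_sum]
      have hev : ∀ i ∈ Finset.range n,
          Polynomial.eval x ((Polynomial.X : Polynomial K) ^ (2 ^ i)) = x ^ (2 ^ i) := by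
        intro i _
        rw [Polynomial.eval_pow, Polynomial.eval_X]
      rw [Finset.sum_congr rfl hev, ← hTr, hall]
      simp
    have hcoeff : P.coeff (2 ^ (n - 1)) = 1 := by
      rw [hP, Polynomial.finset_sum_coeff]
      have hco : ∀ i ∈ Finset.range n,
          ((Polynomial.X : Polynomial K) ^ (2 ^ i)).coeff (2 ^ (n - 1))
          = if i = n - 1 then 1 else 0 := by
        intro i _
        rw [Polynomial.coeff_X_pow]
        by_cases hi : i = n - 1
        · rw [if_pos hi, if_pos (by rw [hi])]
        · rw [if_neg hi, if_neg (fun h => hi (Nat.pow_right_injective le_rfl h).symm)]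
      rw [Finset.sum_congr rfl hco,
        Finset.sum_ite_eq' (Finset.range n) (n - 1) (fun _ => (1 : K)),
        if_pos (Finset.mem_range.mpr (by omega))]
    have hPne : P ≠ 0 := by
      intro h
      rw [h] at hcoeff
      simp at hcoeff
    have hdeg : P.natDegree ≤ 2 ^ (n - 1) := by
      rw [hP]
      refine le_trans (Polynomial.natDegree_sum_le _ _) ?_
      rw [Finset.fold_max_le]
      refine ⟨Nat.zero_le _, ?_⟩
      intro i hi
      simp only [Function.comp]
      rw [Polynomial.natDegree_X_pow]
      exact Nat.pow_le_pow_right (by norm_num) (by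
        have := Finset.mem_range.mp hi; omega)
    have hroots : (Finset.univ : Finset K) ⊆ P.roots.toFinset := by
      intro x _
      rw [Multiset.mem_toFinset, Polynomial.mem_roots']
      exact ⟨hPne, heval x⟩
    have hcon : (2 : ℕ) ^ n ≤ 2 ^ (n - 1) := by
      calc (2 : ℕ) ^ n = Fintype.card K := hcard.symm
      _ = (Finset.univ : Finset K).card := Finset.card_univ.symm
      _ ≤ P.roots.toFinset.card := Finset.card_le_card hroots
      _ ≤ Multiset.card P.roots := Multiset.toFinset_card_le _
      _ ≤ P.natDegree := Polynomial.card_roots' P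
      _ ≤ 2 ^ (n - 1) := hdeg
    have hlt : (2 : ℕ) ^ (n - 1) < 2 ^ n := Nat.pow_lt_pow_right (by norm_num) (by omega)
    omega
  -- cube root of unity
  obtain ⟨g, hg⟩ := IsCyclic.exists_generator (α := Kˣ)
  have hord : orderOf g = 2 ^ n - 1 := by
    rw [orderOf_eq_card_of_forall_mem_zpowers hg, Nat.card_eq_fintype_card,
      Fintype.card_units, hcard]
  have h3dvd : 3 ∣ 2 ^ n - 1 := by
    have h4 : ∀ k : ℕ, (3 : ℕ) ∣ 4 ^ k - 1 := by
      intro k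
      induction k with
      | zero => simp
      | succ j ih =>
        obtain ⟨c, hc⟩ := ih
        have h4j : (1 : ℕ) ≤ 4 ^ j := Nat.one_le_pow _ _ (by norm_num)
        refine ⟨4 * c + 1, ?_⟩
        rw [pow_succ]
        omega
    have h2n4 : (2 : ℕ) ^ n = 4 ^ m := by
      rw [hm, ← two_mul, pow_mul]
      norm_num
    rw [h2n4]
    exact h4 m
  have hM0 : 2 ^ n - 1 ≠ 0 := by
    have h1 : (2 : ℕ) ≤ 2 ^ n := by
      calc (2 : ℕ) = 2 ^ 1 := (pow_one 2).symm
      _ ≤ 2 ^ n := Nat.pow_le_pow_right (by norm_num) (by omega)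
    omega
  set ωu : Kˣ := g ^ ((2 ^ n - 1) / 3) with hωu
  have hordω : orderOf ωu = 3 := by
    rw [hωu, orderOf_pow, hord, Nat.gcd_eq_right (Nat.div_dvd_of_dvd h3dvd),
      Nat.div_div_self h3dvd hM0]
  set ω : K := (ωu : K) with hω
  have hω3 : ω ^ 3 = 1 := by
    have h := pow_orderOf_eq_one ωu
    rw [hordω] at h
    rw [hω, ← Units.val_pow_eq_pow_val, h, Units.val_one]
  have hω1 : ω ≠ 1 := by
    intro h
    have hu1 : ωu = 1 := Units.val_eq_one.mp h
    rw [hu1, orderOf_one] at hordω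
    omega
  have hsum : ω ^ 2 + ω + 1 = 0 := by
    have hfac : (ω - 1) * (ω ^ 2 + ω + 1) = ω ^ 3 - 1 := by ring
    rw [hω3, sub_self] at hfac
    rcases mul_eq_zero.mp hfac with h | h
    · exact absurd (sub_eq_zero.mp h) hω1
    · exact h
  have hcube : ∀ x y : K, x ^ 3 = y ^ 3 → y = x ∨ y = ω * x ∨ y = ω ^ 2 * x := by
    intro x y h
    by_cases hx : x = 0
    · left
      rw [hx] at h ⊢
      have hy3 : y ^ 3 = 0 := by rw [← h]; simp
      exact pow_eq_zero_iff (by norm_num) |>.mp hy3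
    · have hfac : (y - x) * ((y - ω * x) * (y - ω ^ 2 * x)) = 0 := by
        linear_combination (x ^ 2 * y - x * y ^ 2) * hsum + (x ^ 2 * y - x ^ 3) * hω3 - h
      rcases mul_eq_zero.mp hfac with h' | h'
      · exact Or.inl (sub_eq_zero.mp h')
      · rcases mul_eq_zero.mp h' with h'' | h''
        · exact Or.inr (Or.inl (sub_eq_zero.mp h''))
        · exact Or.inr (Or.inr (sub_eq_zero.mp h''))
  -- normalized function
  set F' : K → K := fun x => F x + F 0 with hF'
  have hF'0 : F' 0 = 0 := by simp only [hF']; exact h2 (F 0)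
  have hcubeω : ∀ x : K, (ω * x) ^ 3 = x ^ 3 := by
    intro x; rw [mul_pow, hω3, one_mul]
  have hF'ω : ∀ x : K, F' (ω * x) = F' x := by
    intro x
    simp only [hF']
    rw [hF (ω * x), hF x, hcubeω]
  have htri : ∀ x y : K, F' y = F' x → y = x ∨ y = ω * x ∨ y = ω ^ 2 * x := by
    intro x y h
    have hFyx : F y = F x := by
      simp only [hF'] at h
      exact add_right_cancel h
    have hGyx : G (y ^ 3) = G (x ^ 3) := by rw [← hF, ← hF, hFyx]
    have hyx : y ^ 3 = x ^ 3 := hinj ⟨y, rfl⟩ ⟨x, rfl⟩ hGyx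
    exact hcube x y hyx.symm
  have hq' : ∀ u x y : K, F' (x + y + u) + F' (x + y) + F' u
      = (F' (x + u) + F' x + F' u) + (F' (y + u) + F' y + F' u) := by
    intro u x y
    have h := hquad u x y
    have hsub : ∀ p q : K, p - q = p + q := by
      intro p q
      have hq2 : -q = q := neg_eq_of_add_eq_zero_left (h2 q)
      rw [sub_eq_add_neg, hq2]
    simp only [hsub] at h
    simp only [hF']
    linear_combination h - h2 (F 0)
  have hmain := main_core n m hm K hcard Tr hTradd hone ω hω3 hω1 F' hF'0 hF'ω htri hq' h2
  -- transfer back to F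
  intro a ha b
  have hts : ∀ x : K, (Tr (a * F x + b * x))
      = Tr (a * F' x + b * x) + Tr (a * F 0) := by
    intro x
    have hFx : F x = F' x + F 0 := by
      simp only [hF']
      linear_combination - h2 (F 0)
    have harg : a * F x + b * x = (a * F' x + b * x) + a * F 0 := by
      rw [hFx]; ring
    rw [harg, hTradd]
  have htransfer : (∑ x : K, (-1 : ℤ) ^ (Tr (a * F x + b * x)).val)
      = (-1 : ℤ) ^ (Tr (a * F 0)).val
        * ∑ x : K, (-1 : ℤ) ^ (Tr (a * F' x + b * x)).val := by
    rw [Finset.mul_sum]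
    apply Finset.sum_congr rfl
    intro x _
    rw [hts x, zmod2_pow_add]
    ring
  have hmem := hmain a ha b
  rw [htransfer]
  have hn2 : n / 2 = m := by omega
  rw [hn2]
  have hval : (Tr (a * F 0)).val = 0 ∨ (Tr (a * F 0)).val = 1 := by
    have := ZMod.val_lt (Tr (a * F 0))
    omega
  simp only [Set.mem_insert_iff, Set.mem_singleton_iff] at hmem ⊢
  rcases hval with hv | hv
  · rw [hv, pow_zero, one_mul]
    exact hmem
  · rw [hv, pow_one]
    rcases hmem with h | h | h | h | h
    · left; rw [h]; ring
    · right; right; left; rw [h]; ring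
    · right; left; rw [h]; ring
    · right; right; right; right; rw [h]; ring
    · right; right; right; left; rw [h]; ring
end
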